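/- arXiv:2211.10127 — 6 statements merged into one kernel-verified Lean document; each statement's English description precedes it below -/
import Mathlib

section
/- Any solution u of the initial value problem satisfies u'(r) → 0 as r → +∞. -/
/-! The flux `ψ ^ (N - 1) * u'` has derivative `-ψ ^ (N - 1) * exp u < 0` and tends to `0` at
`0⁺`, so `u' ≤ 0` and `exp u` decreases to a limit. The energy `u' ^ 2 / 2 + exp u` is nonnegative
and has derivative `-(N - 1) (ψ' / ψ) u' ^ 2`; as `ψ' / ψ` is eventually bounded below by a
positive constant, the energy is eventually nonincreasing and converges, hence so does `u' ^ 2`.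
A positive limit of `u' ^ 2` would make the energy eventually decrease at a fixed positive rate,
contradicting its nonnegativity. -/

open Set Real Filter Topology

lemma antitoneOn_of_hasDerivAt_nonpos {D : Set ℝ} (hD : Convex ℝ D) {f f' : ℝ → ℝ}
    (hf : ∀ x ∈ D, HasDerivAt f (f' x) x) (hf' : ∀ x ∈ interior D, f' x ≤ 0) :
    AntitoneOn f D :=
  antitoneOn_of_hasDerivWithinAt_nonpos hD (fun x hx => (hf x hx).continuousAt.continuousWithinAt)
    (fun x hx => (hf x (interior_subset hx)).hasDerivWithinAt) hf'

lemma AntitoneOn.le_of_tendsto_nhdsGT {f : ℝ → ℝ} {a l : ℝ} (hf : AntitoneOn f (Ioi a))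
    (hl : Tendsto f (𝓝[>] a) (𝓝 l)) {x : ℝ} (hx : a < x) : f x ≤ l := by
  refine ge_of_tendsto hl ?_
  filter_upwards [Ioo_mem_nhdsGT hx] with y hy
  exact hf hy.1 hx hy.2.le

lemma AntitoneOn.exists_tendsto_atTop {f : ℝ → ℝ} {a b : ℝ} (hf : AntitoneOn f (Ici a))
    (hb : ∀ x ≥ a, b ≤ f x) : ∃ l, Tendsto f atTop (𝓝 l) := by
  set g : ℝ → ℝ := fun x => f (max x a)
  have hg : Antitone g := fun x y hxy =>
    hf (le_max_right x a) (le_max_right y a) (max_le_max hxy le_rfl)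
  have hgb : BddBelow (range g) := ⟨b, by rintro _ ⟨x, rfl⟩; exact hb _ (le_max_right x a)⟩
  refine ⟨_, (tendsto_atTop_ciInf hg hgb).congr' ?_⟩
  filter_upwards [eventually_ge_atTop a] with x hx
  simp only [g, max_eq_left hx]

lemma tendsto_atBot_of_hasDerivAt_le_neg {f f' : ℝ → ℝ} {a K : ℝ} (hK : 0 < K)
    (hf : ∀ x ≥ a, HasDerivAt f (f' x) x) (hf' : ∀ x ≥ a, f' x ≤ -K) :
    Tendsto f atTop atBot := by
  have hlin : ∀ x ≥ a, f x ≤ (f a + K * a) + -K * x := by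
    intro x hx
    have := (convex_Ici a).image_sub_le_mul_sub_of_deriv_le
      (fun y hy => (hf y hy).continuousAt.continuousWithinAt)
      (fun y hy => (hf y (interior_subset hy)).differentiableAt.differentiableWithinAt)
      (fun y hy => (hf y (interior_subset hy)).deriv ▸ hf' y (interior_subset hy))
      a self_mem_Ici x hx hx
    linarith
  refine tendsto_atBot_mono' _ (eventually_ge_atTop a |>.mono hlin) ?_
  exact tendsto_atBot_add_const_left _ _ (tendsto_id.const_mul_atTop_of_neg (neg_lt_zero.2 hK))

lemma ContDiffOn.hasDerivAt_deriv_of_Ici {f : ℝ → ℝ} {a r : ℝ} (hf : ContDiffOn ℝ 2 f (Ici a))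
    (hr : a < r) : HasDerivAt f (deriv f r) r ∧ HasDerivAt (deriv f) (deriv (deriv f) r) r := by
  have hf' : ContDiffOn ℝ 1 (deriv f) (Ioi a) :=
    (hf.mono Ioi_subset_Ici_self).deriv_of_isOpen isOpen_Ioi (by norm_num)
  exact ⟨((hf.differentiableOn two_ne_zero).differentiableAt (Ici_mem_nhds hr)).hasDerivAt,
    ((hf'.differentiableOn one_ne_zero).differentiableAt (Ioi_mem_nhds hr)).hasDerivAt⟩

lemma ContDiffOn.tendsto_deriv_nhdsGT {f : ℝ → ℝ} {a : ℝ} {n : WithTop ℕ∞}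
    (hf : ContDiffOn ℝ n f (Ici a)) (hn : 1 ≤ n) :
    Tendsto (deriv f) (𝓝[>] a) (𝓝 (derivWithin f (Ici a) a)) := by
  refine ((hf.continuousOn_derivWithin (uniqueDiffOn_Ici a) hn a self_mem_Ici).mono_left
    (nhdsWithin_mono _ Ioi_subset_Ici_self)).congr' ?_
  filter_upwards [self_mem_nhdsWithin] with r hr
  exact derivWithin_of_mem_nhds (Ici_mem_nhds hr)

section RadialLiouville

variable {ψ ψ' u u' a : ℝ → ℝ} {r : ℝ}

lemma hasDerivAt_pow_mul_of_radial_liouville {k : ℕ} (hψr : ψ r ≠ 0)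
    (hψ : HasDerivAt ψ (ψ' r) r)
    (hu' : HasDerivAt u' (-(k * (ψ' r / ψ r) * u' r) - exp (u r)) r) :
    HasDerivAt (fun s => ψ s ^ k * u' s) (-(ψ r ^ k * exp (u r))) r := by
  refine ((hψ.fun_pow k).fun_mul hu').congr_deriv ?_
  rcases k with _ | k
  · simp
  · field_simp
    push_cast
    ring

lemma hasDerivAt_energy_of_liouville (hu : HasDerivAt u (u' r) r)
    (hu' : HasDerivAt u' (-(a r * u' r) - exp (u r)) r) :
    HasDerivAt (fun s => u' s ^ 2 / 2 + exp (u s)) (-(a r * u' r ^ 2)) r := by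
  refine (((hu'.pow 2).div_const 2).fun_add hu.exp).congr_deriv ?_
  ring

lemma nonpos_of_radial_liouville {k : ℕ} {b : ℝ} (hk : k ≠ 0) (hψpos : ∀ r > 0, 0 < ψ r)
    (hψ : ∀ r > 0, HasDerivAt ψ (ψ' r) r) (hψ0 : Tendsto ψ (𝓝[>] 0) (𝓝 0))
    (hu'0 : Tendsto u' (𝓝[>] 0) (𝓝 b))
    (hu' : ∀ r > 0, HasDerivAt u' (-(k * (ψ' r / ψ r) * u' r) - exp (u r)) r)
    (hr : 0 < r) : u' r ≤ 0 := by
  have hflux : AntitoneOn (fun s => ψ s ^ k * u' s) (Ioi 0) := by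
    refine antitoneOn_of_hasDerivAt_nonpos (convex_Ioi 0)
      (fun s hs => hasDerivAt_pow_mul_of_radial_liouville (hψpos s hs).ne' (hψ s hs) (hu' s hs))
      fun s hs => ?_
    have := pow_pos (hψpos s (interior_subset hs)) k
    have := exp_pos (u s)
    nlinarith
  have hlim : Tendsto (fun s => ψ s ^ k * u' s) (𝓝[>] 0) (𝓝 0) := by
    simpa [zero_pow hk] using (hψ0.pow k).mul hu'0
  exact nonpos_of_mul_nonpos_right (hflux.le_of_tendsto_nhdsGT hlim hr) (pow_pos (hψpos r hr) k)

theorem tendsto_atTop_zero_of_damped_liouville {m R : ℝ} (hm : 0 < m) (ha : ∀ r ≥ R, m ≤ a r)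
    (hu : ∀ r ≥ R, HasDerivAt u (u' r) r)
    (hu' : ∀ r ≥ R, HasDerivAt u' (-(a r * u' r) - exp (u r)) r)
    (hneg : ∀ r ≥ R, u' r ≤ 0) : Tendsto u' atTop (𝓝 0) := by
  set E : ℝ → ℝ := fun s => u' s ^ 2 / 2 + exp (u s)
  have hE : ∀ r ≥ R, HasDerivAt E (-(a r * u' r ^ 2)) r := fun r hr =>
    hasDerivAt_energy_of_liouville (hu r hr) (hu' r hr)
  obtain ⟨lg, hlg⟩ : ∃ l, Tendsto (fun s => exp (u s)) atTop (𝓝 l) := by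
    have hanti : AntitoneOn u (Ici R) := antitoneOn_of_hasDerivAt_nonpos (convex_Ici R) hu
      fun s hs => hneg s (interior_subset hs)
    exact (exp_monotone.comp_antitoneOn hanti).exists_tendsto_atTop fun s _ => (exp_pos _).le
  obtain ⟨lE, hlE⟩ : ∃ l, Tendsto E atTop (𝓝 l) := by
    have hanti : AntitoneOn E (Ici R) := antitoneOn_of_hasDerivAt_nonpos (convex_Ici R) hE
      fun s hs => by
        have := ha s (interior_subset hs)
        nlinarith [sq_nonneg (u' s)]
    exact hanti.exists_tendsto_atTop (b := 0) fun s _ => by positivity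
  have hsq : Tendsto (fun s => u' s ^ 2) atTop (𝓝 (2 * (lE - lg))) :=
    ((hlE.sub hlg).const_mul 2).congr fun s => by simp only [E]; ring
  have hc : 2 * (lE - lg) = 0 := by
    by_contra hc
    set c := 2 * (lE - lg)
    have hcpos : 0 < c := (ge_of_tendsto' hsq fun s => sq_nonneg _).lt_of_ne' hc
    obtain ⟨R', hR'⟩ := eventually_atTop.1
      ((hsq.eventually (eventually_ge_nhds (half_lt_self hcpos))).and (eventually_ge_atTop R))
    refine not_tendsto_nhds_of_tendsto_atBot (tendsto_atBot_of_hasDerivAt_le_neg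
      (mul_pos hm (half_pos hcpos)) (fun s hs => hE s (hR' s hs).2) fun s hs => ?_) lE hlE
    have := ha s (hR' s hs).2
    have := (hR' s hs).1
    nlinarith
  rw [hc] at hsq
  rw [tendsto_zero_iff_abs_tendsto_zero]
  simpa [Function.comp_def, sqrt_sq_eq_abs] using (continuous_sqrt.tendsto 0).comp hsq

end RadialLiouville

theorem statement1_general (N : ℕ) (hN : 2 ≤ N) (ψ : ℝ → ℝ)
    (hψC2 : ContDiffOn ℝ 2 ψ (Ici 0))
    (hψpos : ∀ r > (0:ℝ), ψ r > 0)
    (hψ0 : ψ 0 = 0)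
    (Λ : EReal) (hΛpos : 0 < Λ)
    (hA3 : Filter.Tendsto (fun r => ((deriv ψ r / ψ r : ℝ) : EReal)) Filter.atTop (nhds Λ))
    (u : ℝ → ℝ)
    (huC2 : ContDiffOn ℝ 2 u (Ici 0))
    (hode : ∀ r > (0:ℝ), deriv (deriv u) r + ((N : ℝ) - 1) * (deriv ψ r / ψ r) * deriv u r
      + Real.exp (u r) = 0)
    : Tendsto (deriv u) atTop (nhds 0) := by
  obtain ⟨k, rfl⟩ : ∃ k, N = k + 1 := ⟨N - 1, by omega⟩
  have hk : (0 : ℝ) < k := by exact_mod_cast (by omega : 0 < k)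
  have hu' : ∀ r > 0, HasDerivAt (deriv u)
      (-(k * (deriv ψ r / ψ r) * deriv u r) - exp (u r)) r := fun r hr => by
    have h := hode r hr
    rw [show ((k + 1 : ℕ) : ℝ) - 1 = k by push_cast; ring] at h
    convert (huC2.hasDerivAt_deriv_of_Ici hr).2 using 1
    linarith
  have hψlim : Tendsto ψ (𝓝[>] 0) (𝓝 0) := by
    simpa only [hψ0] using
      (hψC2.continuousOn 0 self_mem_Ici).mono_left (nhdsWithin_mono _ Ioi_subset_Ici_self)
  have hneg : ∀ r > 0, deriv u r ≤ 0 := fun r hr =>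
    nonpos_of_radial_liouville (by omega) hψpos (fun s hs => (hψC2.hasDerivAt_deriv_of_Ici hs).1)
      hψlim      (huC2.tendsto_deriv_nhdsGT one_le_two) hu' hr
  obtain ⟨m, hm0, hmΛ⟩ := EReal.lt_iff_exists_real_btwn.1 hΛpos
  obtain ⟨R, hR⟩ := eventually_atTop.1 <|
    (hA3.eventually (eventually_gt_nhds hmΛ)).and (eventually_gt_atTop 0)
  refine tendsto_atTop_zero_of_damped_liouville (mul_pos hk (EReal.coe_pos.1 hm0))
    (fun r hr => mul_le_mul_of_nonneg_left (EReal.coe_lt_coe_iff.1 (hR r hr).1).le hk.le)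
    (fun r hr => (huC2.hasDerivAt_deriv_of_Ici (hR r hr).2).1)
    (fun r hr => hu' r (hR r hr).2) fun r hr => hneg r (hR r hr).2

theorem statement1 (N : ℕ) (hN : 2 ≤ N) (ψ : ℝ → ℝ)
    (hψC2 : ContDiffOn ℝ 2 ψ (Ici 0))
    (hψpos : ∀ r > (0:ℝ), ψ r > 0)
    (hψ0 : ψ 0 = 0) (hψ''0 : deriv (deriv ψ) 0 = 0) (hψ'0 : deriv ψ 0 = 1)
    (hψ'pos : ∀ r > (0:ℝ), deriv ψ r > 0)
    (Λ : EReal) (hΛpos : 0 < Λ)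
    (hA3 : Filter.Tendsto (fun r => ((deriv ψ r / ψ r : ℝ) : EReal)) Filter.atTop (nhds Λ))
    (α : ℝ) (u : ℝ → ℝ)
    (huC2 : ContDiffOn ℝ 2 u (Ici 0)) (hu0 : u 0 = α) (hu'0 : deriv u 0 = 0)
    (hode : ∀ r > (0:ℝ), deriv (deriv u) r + ((N : ℝ) - 1) * (deriv ψ r / ψ r) * deriv u r
      + Real.exp (u r) = 0)
    : Tendsto (deriv u) atTop (nhds 0) :=
  statement1_general N hN ψ hψC2 hψpos hψ0 Λ hΛpos hA3 u huC2 hode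
end

section
/- If the solution u of the initial value problem satisfies u(r) → −∞ as r → +∞, then (u''(r)/u'(r))·(ψ(r)/ψ'(r)) → 0 as r → +∞. -/
/-!
Since `ψ'/ψ` is eventually bounded below by a positive constant, the energy `u'²/2 + eᵘ`, whose
derivative is `-(N-1)(ψ'/ψ)u'²`, decreases to a limit, and this limit must be `0`, so `u' → 0`.
The quantity `σ = -u' e⁻ᵘ` solves the linear equation `σ' = 1 - ((N-1)ψ'/ψ + u')σ`, and the
ratio in question equals `-(N-1) + 1/ρ` with `ρ = σ ψ'/ψ`, so it suffices that `ρ → 1/(N-1)`.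
If `Λ < ∞` this follows from `σ → 1/((N-1)Λ)`; if `Λ = ∞`, `ρ` itself solves
`ρ' = ψ'/ψ - ((N-1)ψ'/ψ + u' - (log (ψ'/ψ))')ρ`, and (A4) makes `(log (ψ'/ψ))'` negligible
against `ψ'/ψ`.
Both cases use that a solution of `X' = f - bX` with `b ≥ c > 0` tends to `lim f/b`: with
`B' = b`, the function `e^B (X - m)` is eventually antitone whenever eventually `f ≤ m b`.
-/

open Set Real Filter Topology

theorem ContDiffAt.hasDerivAt_deriv {f : ℝ → ℝ} {x : ℝ} (hf : ContDiffAt ℝ 2 f x) :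
    HasDerivAt (deriv f) (deriv (deriv f) x) x :=
  ((hf.derivWithin (m := 1) (by norm_num)).differentiableAt one_ne_zero).hasDerivAt

theorem eventually_antitoneOn_Ici_of_hasDerivAt {f f' : ℝ → ℝ}
    (hf : ∀ᶠ r in atTop, HasDerivAt f (f' r) r) (hf' : ∀ᶠ r in atTop, f' r ≤ 0) :
    ∀ᶠ r₀ in atTop, AntitoneOn f (Ici r₀) := by
  obtain ⟨r₁, h⟩ := (hf.and hf').exists_forall_of_atTop
  filter_upwards [eventually_ge_atTop r₁] with r₀ hr₀
  have h' : ∀ x ∈ Ici r₀, HasDerivAt f (f' x) x ∧ f' x ≤ 0 := fun x hx => h x (hr₀.trans hx)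
  refine antitoneOn_of_hasDerivWithinAt_nonpos (f' := f') (convex_Ici r₀)
    (fun x hx => (h' x hx).1.continuousAt.continuousWithinAt) (fun x hx => ?_) (fun x hx => ?_)
  · exact (h' x (interior_subset hx)).1.hasDerivWithinAt
  · exact (h' x (interior_subset hx)).2

theorem tendsto_atTop_of_hasDerivAt_ge {B b : ℝ → ℝ} {c : ℝ} (hc : 0 < c)
    (hB : ∀ᶠ r in atTop, HasDerivAt B (b r) r) (hb : ∀ᶠ r in atTop, c ≤ b r) :
    Tendsto B atTop atTop := by
  have hanti : ∀ᶠ r₀ in atTop, AntitoneOn (fun r => c * r - B r) (Ici r₀) :=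
    eventually_antitoneOn_Ici_of_hasDerivAt
      (hB.mono fun r h => ((hasDerivAt_id r).const_mul c).sub h) (hb.mono fun r h => by simpa)
  obtain ⟨r₀, hr₀⟩ := hanti.exists
  have hlin : Tendsto (fun r => B r₀ + c * (r - r₀)) atTop atTop :=
    tendsto_atTop_add_const_left _ _
      ((tendsto_atTop_add_const_right _ _ tendsto_id).const_mul_atTop hc)
  refine tendsto_atTop_mono' _ ?_ hlin
  filter_upwards [eventually_ge_atTop r₀] with r hr
  linarith [hr₀ self_mem_Ici hr hr]

theorem eventually_lt_of_hasDerivAt_eq_sub_mul {X B b f : ℝ → ℝ} {m a : ℝ}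
    (hBtop : Tendsto B atTop atTop) (hB : ∀ᶠ r in atTop, HasDerivAt B (b r) r)
    (hX : ∀ᶠ r in atTop, HasDerivAt X (f r - b r * X r) r)
    (hf : ∀ᶠ r in atTop, f r ≤ m * b r) (hma : m < a) :
    ∀ᶠ r in atTop, X r < a := by
  have hanti : ∀ᶠ r₀ in atTop, AntitoneOn (fun r => exp (B r) * (X r - m)) (Ici r₀) := by
    refine eventually_antitoneOn_Ici_of_hasDerivAt
      (f' := fun r => exp (B r) * (f r - m * b r)) ?_ ?_
    · filter_upwards [hB, hX] with r hBr hXr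
      exact (hBr.exp.mul (hXr.sub_const m)).congr_deriv (by ring)
    · filter_upwards [hf] with r hr
      exact mul_nonpos_of_nonneg_of_nonpos (exp_pos _).le (by linarith)
  obtain ⟨r₀, hr₀⟩ := hanti.exists
  have hdecay : Tendsto (fun r => exp (B r₀) * (X r₀ - m) * exp (-B r)) atTop (𝓝 0) := by
    simpa using (tendsto_exp_atBot.comp (tendsto_neg_atTop_atBot.comp hBtop)).const_mul
      (exp (B r₀) * (X r₀ - m))
  filter_upwards [hdecay.eventually_lt_const (sub_pos.2 hma), eventually_ge_atTop r₀]
    with r hsmall hr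
  have hle := hr₀ self_mem_Ici hr hr
  have : X r - m ≤ exp (B r₀) * (X r₀ - m) * exp (-B r) := by
    rw [exp_neg, ← div_eq_mul_inv, le_div_iff₀ (exp_pos _)]
    linarith
  linarith

theorem tendsto_of_hasDerivAt_eq_sub_mul {X B b f : ℝ → ℝ} {c L : ℝ} (hc : 0 < c)
    (hB : ∀ᶠ r in atTop, HasDerivAt B (b r) r) (hb : ∀ᶠ r in atTop, c ≤ b r)
    (hX : ∀ᶠ r in atTop, HasDerivAt X (f r - b r * X r) r)
    (hL : Tendsto (fun r => f r / b r) atTop (𝓝 L)) :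
    Tendsto X atTop (𝓝 L) := by
  have hBtop := tendsto_atTop_of_hasDerivAt_ge hc hB hb
  have upper : ∀ {X f : ℝ → ℝ} {L : ℝ}, (∀ᶠ r in atTop, HasDerivAt X (f r - b r * X r) r) →
      Tendsto (fun r => f r / b r) atTop (𝓝 L) → ∀ a > L, ∀ᶠ r in atTop, X r < a := by
    intro X f L hX hL a ha
    obtain ⟨m, hLm, hma⟩ := exists_between ha
    refine eventually_lt_of_hasDerivAt_eq_sub_mul hBtop hB hX ?_ hma
    filter_upwards [hL.eventually_lt_const hLm, hb] with r hr hbr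
    exact ((div_lt_iff₀ (hc.trans_le hbr)).1 hr).le
  refine tendsto_order.2 ⟨fun a ha => ?_, upper hX hL⟩
  have hX' : ∀ᶠ r in atTop, HasDerivAt (-X) (-f r - b r * (-X) r) r :=
    hX.mono fun r h => h.neg.congr_deriv (by simp only [Pi.neg_apply]; ring)
  have hL' : Tendsto (fun r => -f r / b r) atTop (𝓝 (-L)) := by
    simpa [neg_div] using hL.neg
  simpa using upper hX' hL' (-a) (neg_lt_neg ha)

theorem exists_pos_eventually_le_of_tendsto_EReal {α : Type*} {l : Filter α} {q : α → ℝ}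
    {Λ : EReal} (hΛ : 0 < Λ) (hq : Tendsto (fun x => (q x : EReal)) l (𝓝 Λ)) :
    ∃ c > 0, ∀ᶠ x in l, c ≤ q x := by
  obtain ⟨c, hc0, hcΛ⟩ := EReal.lt_iff_exists_real_btwn.1 hΛ
  exact ⟨c, EReal.coe_pos.1 hc0, (hq.eventually_const_lt hcΛ).mono fun x hx =>
    (EReal.coe_lt_coe_iff.1 hx).le⟩

theorem tendsto_zero_of_damped_exp_ode {u v k : ℝ → ℝ} {c : ℝ} (hc : 0 < c)
    (hu : ∀ᶠ r in atTop, HasDerivAt u (v r) r)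
    (hv : ∀ᶠ r in atTop, HasDerivAt v (-(k r * v r) - exp (u r)) r)
    (hk : ∀ᶠ r in atTop, c ≤ k r) (hu_bot : Tendsto u atTop atBot) :
    Tendsto v atTop (𝓝 0) := by
  set E : ℝ → ℝ := fun r => v r ^ 2 / 2 + exp (u r)
  have hE : ∀ᶠ r in atTop, HasDerivAt E (-(k r * v r ^ 2)) r := by
    filter_upwards [hu, hv] with r hur hvr
    exact (((hvr.pow 2).div_const 2).add hur.exp).congr_deriv (by ring)
  have hE_nonneg : ∀ r, 0 ≤ E r := fun r => by positivity
  obtain ⟨r₀, hr₀⟩ := (eventually_antitoneOn_Ici_of_hasDerivAt hE <| hk.mono fun r hr =>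
    neg_nonpos.2 (mul_nonneg (hc.le.trans hr) (sq_nonneg _))).exists
  have hmono : Antitone fun r => E (max r r₀) := fun a b hab =>
    hr₀ (le_max_right a r₀) (le_max_right b r₀) (max_le_max_right r₀ hab)
  obtain ⟨l, hl⟩ : ∃ l, Tendsto E atTop (𝓝 l) := by
    refine ⟨_, (tendsto_atTop_ciInf hmono ⟨0, ?_⟩).congr' ?_⟩
    · rintro _ ⟨r, rfl⟩
      exact hE_nonneg _
    · filter_upwards [eventually_ge_atTop r₀] with r hr
      rw [max_eq_left hr]
  have hv2 : Tendsto (fun r => v r ^ 2) atTop (𝓝 (2 * l)) := by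
    have := ((hl.sub (tendsto_exp_atBot.comp hu_bot)).const_mul 2)
    simpa [E, Function.comp_def, mul_sub, mul_add, mul_div_cancel₀] using this
  -- If `E` had a positive limit `l`, then eventually `E' ≤ -c l`, forcing `E → -∞`.
  have hl0 : l = 0 := by
    by_contra hl0
    have hlpos : 0 < l := (ge_of_tendsto hl (Eventually.of_forall hE_nonneg)).lt_of_ne' hl0
    refine not_tendsto_atTop_of_tendsto_nhds hl.neg
      (tendsto_atTop_of_hasDerivAt_ge (mul_pos hc hlpos) (hE.mono fun r h => h.neg) ?_)
    filter_upwards [hk, hv2.eventually_const_le (by linarith : l < 2 * l)] with r hkr hvr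
    simp only [neg_neg]
    exact mul_le_mul hkr hvr hlpos.le (hc.le.trans hkr)
  rw [hl0, mul_zero] at hv2
  rw [tendsto_zero_iff_abs_tendsto_zero]
  simpa [Function.comp_def, sqrt_sq_eq_abs] using (continuous_sqrt.tendsto 0).comp hv2

theorem hasDerivAt_neg_mul_exp_neg {u v q : ℝ → ℝ} {κ r : ℝ} (hu : HasDerivAt u (v r) r)
    (hv : HasDerivAt v (-(κ * q r * v r) - exp (u r)) r) :
    HasDerivAt (fun s => -v s * exp (-u s)) (1 - (κ * q r + v r) * (-v r * exp (-u r))) r :=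
  (hv.neg.mul hu.neg.exp).congr_deriv (by simp only [Pi.neg_apply, exp_neg]; field_simp; ring)

theorem tendsto_neg_mul_exp_neg_mul_of_tendsto_nhds {u v q P : ℝ → ℝ} {κ L : ℝ}
    (hκ : 0 < κ) (hL : 0 < L)
    (hP : ∀ᶠ r in atTop, HasDerivAt P (q r) r) (hu : ∀ᶠ r in atTop, HasDerivAt u (v r) r)
    (hv : ∀ᶠ r in atTop, HasDerivAt v (-(κ * q r * v r) - exp (u r)) r)
    (hq : Tendsto q atTop (𝓝 L)) (hv0 : Tendsto v atTop (𝓝 0)) :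
    Tendsto (fun r => -v r * exp (-u r) * q r) atTop (𝓝 κ⁻¹) := by
  have hκL : 0 < κ * L := mul_pos hκ hL
  have hb : Tendsto (fun r => κ * q r + v r) atTop (𝓝 (κ * L)) := by
    simpa using (hq.const_mul κ).add hv0
  have hσ : Tendsto (fun r => -v r * exp (-u r)) atTop (𝓝 (κ * L)⁻¹) := by
    refine tendsto_of_hasDerivAt_eq_sub_mul (B := fun r => κ * P r + u r) (f := fun _ => 1)
      (half_pos hκL) ?_ (hb.eventually_const_le (half_lt_self hκL)) ?_ ?_
    · filter_upwards [hP, hu] with r hPr hur using (hPr.const_mul κ).add hur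
    · filter_upwards [hu, hv] with r hur hvr using hasDerivAt_neg_mul_exp_neg hur hvr
    · simpa [one_div] using hb.inv₀ hκL.ne'
  convert hσ.mul hq using 2
  field_simp

theorem tendsto_neg_mul_exp_neg_mul_of_tendsto_atTop {u v q q' P : ℝ → ℝ} {κ C : ℝ} (hκ : 0 < κ)
    (hP : ∀ᶠ r in atTop, HasDerivAt P (q r) r) (hu : ∀ᶠ r in atTop, HasDerivAt u (v r) r)
    (hv : ∀ᶠ r in atTop, HasDerivAt v (-(κ * q r * v r) - exp (u r)) r)
    (hq' : ∀ᶠ r in atTop, HasDerivAt q (q' r) r) (hq : Tendsto q atTop atTop)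
    (hC : ∀ᶠ r in atTop, |q' r / q r| ≤ C) (hv0 : Tendsto v atTop (𝓝 0)) :
    Tendsto (fun r => -v r * exp (-u r) * q r) atTop (𝓝 κ⁻¹) := by
  set b : ℝ → ℝ := fun r => κ * q r + v r - q' r / q r
  have hqpos : ∀ᶠ r in atTop, 0 < q r := hq.eventually_gt_atTop 0
  have hbq : Tendsto (fun r => b r / q r) atTop (𝓝 κ) := by
    have hvq : Tendsto (fun r => v r / q r) atTop (𝓝 0) := hv0.div_atTop hq
    have hq'q : Tendsto (fun r => q' r / q r / q r) atTop (𝓝 0) := by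
      refine squeeze_zero_norm' ?_ ((tendsto_const_nhds (x := C)).div_atTop hq)
      filter_upwards [hC, hqpos] with r hr hqr
      rw [norm_div, norm_of_nonneg hqr.le]
      exact div_le_div_of_nonneg_right hr hqr.le
    have hlim : Tendsto (fun r => κ + (v r / q r - q' r / q r / q r)) atTop (𝓝 κ) := by
      simpa using (hvq.sub hq'q).const_add κ
    refine hlim.congr' ?_
    filter_upwards [hqpos] with r hr
    simp only [b]
    field_simp
    ring
  have hqb : Tendsto (fun r => q r / b r) atTop (𝓝 κ⁻¹) := by
    simpa only [inv_div] using hbq.inv₀ hκ.ne'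
  refine tendsto_of_hasDerivAt_eq_sub_mul (B := fun r => κ * P r + u r - log (q r)) one_pos
    ?_ ?_ ?_ hqb
  · filter_upwards [hP, hu, hq', hqpos] with r hPr hur hqr hqr0
    exact ((hPr.const_mul κ).add hur).sub (hqr.log hqr0.ne')
  · filter_upwards [hbq.eventually_const_le (half_lt_self hκ),
      hq.eventually_ge_atTop (2 / κ), hqpos] with r hbr hqr hqr0
    calc (1 : ℝ) = κ / 2 * (2 / κ) := by field_simp
      _ ≤ b r / q r * q r := mul_le_mul hbr hqr (by positivity) (by linarith)
      _ = b r := div_mul_cancel₀ _ hqr0.ne'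
  · filter_upwards [hu, hv, hq', hqpos] with r hur hvr hqr hqr0
    refine ((hasDerivAt_neg_mul_exp_neg hur hvr).mul hqr).congr_deriv ?_
    simp only [b]
    field_simp
    ring

theorem tendsto_neg_mul_exp_neg_mul_of_tendsto_EReal {u v q q' P : ℝ → ℝ} {κ : ℝ} {Λ : EReal}
    (hκ : 0 < κ) (hΛ : 0 < Λ)
    (hP : ∀ᶠ r in atTop, HasDerivAt P (q r) r) (hu : ∀ᶠ r in atTop, HasDerivAt u (v r) r)
    (hv : ∀ᶠ r in atTop, HasDerivAt v (-(κ * q r * v r) - exp (u r)) r)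
    (hq' : ∀ᶠ r in atTop, HasDerivAt q (q' r) r)
    (hqΛ : Tendsto (fun r => (q r : EReal)) atTop (𝓝 Λ))
    (hC : Λ = ⊤ → ∃ C : ℝ, ∀ᶠ r in atTop, |deriv (fun s => log (q s)) r| ≤ C)
    (hu_bot : Tendsto u atTop atBot) :
    Tendsto (fun r => -v r * exp (-u r) * q r) atTop (𝓝 κ⁻¹) := by
  obtain ⟨c, hc, hqc⟩ := exists_pos_eventually_le_of_tendsto_EReal hΛ hqΛ
  have hv0 : Tendsto v atTop (𝓝 0) :=
    tendsto_zero_of_damped_exp_ode (mul_pos hκ hc) hu hv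
      (hqc.mono fun r hr => mul_le_mul_of_nonneg_left hr hκ.le) hu_bot
  induction Λ using EReal.rec with
  | bot => exact absurd hΛ not_lt_bot
  | coe L =>
    exact tendsto_neg_mul_exp_neg_mul_of_tendsto_nhds hκ (EReal.coe_pos.1 hΛ) hP hu hv
      (EReal.tendsto_coe.1 hqΛ) hv0
  | top =>
    obtain ⟨C, hC⟩ := hC rfl
    have hq : Tendsto q atTop atTop := tendsto_atTop.2 fun x =>
      (EReal.tendsto_nhds_top_iff_real.1 hqΛ x).mono fun r hr => (EReal.coe_lt_coe_iff.1 hr).le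
    refine tendsto_neg_mul_exp_neg_mul_of_tendsto_atTop (C := C) hκ hP hu hv hq' hq ?_ hv0
    filter_upwards [hC, hq', hq.eventually_gt_atTop 0] with r hCr hq'r hqr
    rwa [(hq'r.log hqr.ne').deriv] at hCr

theorem tendsto_div_mul_inv_of_tendsto_neg_mul_exp_neg_mul {u v v' q : ℝ → ℝ} {κ : ℝ} (hκ : κ ≠ 0)
    (hode : ∀ᶠ r in atTop, v' r + κ * q r * v r + exp (u r) = 0)
    (hρ : Tendsto (fun r => -v r * exp (-u r) * q r) atTop (𝓝 κ⁻¹)) :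
    Tendsto (fun r => v' r / v r * (q r)⁻¹) atTop (𝓝 0) := by
  have hlim : Tendsto (fun r => -κ + (-v r * exp (-u r) * q r)⁻¹) atTop (𝓝 0) := by
    simpa using (hρ.inv₀ (inv_ne_zero hκ)).const_add (-κ)
  refine hlim.congr' ?_
  filter_upwards [hode, hρ.eventually_ne (inv_ne_zero hκ)] with r hr hρr
  obtain ⟨hσ, hq⟩ := mul_ne_zero_iff.1 hρr
  obtain ⟨hv, -⟩ := mul_ne_zero_iff.1 hσ
  rw [neg_ne_zero] at hv
  rw [exp_neg]
  field_simp
  linear_combination -hr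

theorem statement5_general (N : ℕ) (hN : 2 ≤ N) (ψ : ℝ → ℝ)
    (hψC2 : ContDiffOn ℝ 2 ψ (Ici 0))
    (hψpos : ∀ r > (0:ℝ), ψ r > 0)
    (Λ : EReal) (hΛpos : 0 < Λ)
    (hA3 : Filter.Tendsto (fun r => ((deriv ψ r / ψ r : ℝ) : EReal)) Filter.atTop (nhds Λ))
    (hA4 : Λ = ⊤ → ∃ C : ℝ, ∀ᶠ r in Filter.atTop,
      |deriv (fun s => Real.log (deriv ψ s / ψ s)) r| ≤ C)
    (u : ℝ → ℝ)
    (huC2 : ContDiffOn ℝ 2 u (Ici 0))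
    (hode : ∀ r > (0:ℝ), deriv (deriv u) r + ((N : ℝ) - 1) * (deriv ψ r / ψ r) * deriv u r
      + Real.exp (u r) = 0)
    (hdiv : Tendsto u atTop atBot)
    : Tendsto (fun r => (deriv (deriv u) r / deriv u r) * (ψ r / deriv ψ r))
        atTop (nhds 0) := by
  have hκ : 0 < (N : ℝ) - 1 := by
    have : (2 : ℝ) ≤ N := by exact_mod_cast hN
    linarith
  have hreg : ∀ᶠ r in atTop, 0 < r ∧ ContDiffAt ℝ 2 ψ r ∧ ContDiffAt ℝ 2 u r :=
    (eventually_gt_atTop 0).mono fun r hr =>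
      ⟨hr, hψC2.contDiffAt (Ici_mem_nhds hr), huC2.contDiffAt (Ici_mem_nhds hr)⟩
  have hlogψ : ∀ᶠ r in atTop, HasDerivAt (fun s => log (ψ s)) (deriv ψ r / ψ r) r :=
    hreg.mono fun r ⟨hr, hψr, _⟩ =>
      (hψr.differentiableAt (by norm_num)).hasDerivAt.log (hψpos r hr).ne'
  have hq : ∀ᶠ r in atTop,
      HasDerivAt (fun s => deriv ψ s / ψ s) (deriv (fun s => deriv ψ s / ψ s) r) r :=
    hreg.mono fun r ⟨hr, hψr, _⟩ => (hψr.hasDerivAt_deriv.differentiableAt.div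
      (hψr.differentiableAt (by norm_num)) (hψpos r hr).ne').hasDerivAt
  have hu : ∀ᶠ r in atTop, HasDerivAt u (deriv u r) r :=
    hreg.mono fun r ⟨_, _, hur⟩ => (hur.differentiableAt (by norm_num)).hasDerivAt
  have hu' : ∀ᶠ r in atTop, HasDerivAt (deriv u)
      (-((N - 1) * (deriv ψ r / ψ r) * deriv u r) - exp (u r)) r :=
    hreg.mono fun r ⟨hr, _, hur⟩ => hur.hasDerivAt_deriv.congr_deriv (by linarith [hode r hr])
  have hρ := tendsto_neg_mul_exp_neg_mul_of_tendsto_EReal hκ hΛpos hlogψ hu hu' hq hA3 hA4 hdiv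
  simpa only [inv_div] using tendsto_div_mul_inv_of_tendsto_neg_mul_exp_neg_mul hκ.ne'
    ((eventually_gt_atTop 0).mono hode) hρ

theorem statement5 (N : ℕ) (hN : 2 ≤ N) (ψ : ℝ → ℝ)
    (hψC2 : ContDiffOn ℝ 2 ψ (Ici 0))
    (hψpos : ∀ r > (0:ℝ), ψ r > 0)
    (hψ0 : ψ 0 = 0) (hψ''0 : deriv (deriv ψ) 0 = 0) (hψ'0 : deriv ψ 0 = 1)
    (hψ'pos : ∀ r > (0:ℝ), deriv ψ r > 0)
    (Λ : EReal) (hΛpos : 0 < Λ)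
    (hA3 : Filter.Tendsto (fun r => ((deriv ψ r / ψ r : ℝ) : EReal)) Filter.atTop (nhds Λ))
    (hA4 : Λ = ⊤ → ∃ C : ℝ, ∀ᶠ r in Filter.atTop,
      |deriv (fun s => Real.log (deriv ψ s / ψ s)) r| ≤ C)
    (α : ℝ) (u : ℝ → ℝ)
    (huC2 : ContDiffOn ℝ 2 u (Ici 0)) (hu0 : u 0 = α) (hu'0 : deriv u 0 = 0)
    (hode : ∀ r > (0:ℝ), deriv (deriv u) r + ((N : ℝ) - 1) * (deriv ψ r / ψ r) * deriv u r
      + Real.exp (u r) = 0)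
    (hdiv : Tendsto u atTop atBot)
    : Tendsto (fun r => (deriv (deriv u) r / deriv u r) * (ψ r / deriv ψ r))
        atTop (nhds 0) :=
  statement5_general N hN ψ hψC2 hψpos Λ hΛpos hA3 hA4 u huC2 hode hdiv
end

section
/- If the function r ↦ ψ(r)/ψ'(r) is integrable on (0, +∞), then the solution u of the initial value problem converges, as r → +∞, to a finite limit belonging to (−∞, α). -/
/-!
In divergence form the equation reads `(ψ^(N-1) u')' = -ψ^(N-1) e^u`, and the flux
`w = ψ^(N-1) u'` vanishes at `0⁺`; hence `w < 0`, so `u' < 0` and `u` decreases from `α`.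
Integrability of `ψ/ψ'` forces `ψ'/ψ → ∞`, so (A4) bounds `(log (ψ'/ψ))'`. The comparison function
`h = ψ^(N-1) / (ψ'/ψ)` then has `h' = ψ^(N-1) ((N-1) - (log (ψ'/ψ))' / (ψ'/ψ)) ≥ ψ^(N-1)/2`
eventually, while `-w' ≤ e^α ψ^(N-1)`; integrating gives `|u'| ≤ 2 e^α ψ/ψ' + |w(R)| / ψ^(N-1)`.
As `ψ^(N-1)` grows at least exponentially, `u'` is integrable near `∞`, so `u` has a limit, which
lies below `u(R) < α`.
-/

open Set Real Filter MeasureTheory Topology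

lemma ContDiffOn.hasDerivAt_of_mem_nhds {f : ℝ → ℝ} {s : Set ℝ} {x : ℝ} {n : WithTop ℕ∞}
    (hf : ContDiffOn ℝ n f s) (hn : n ≠ 0) (hs : s ∈ 𝓝 x) : HasDerivAt f (deriv f x) x :=
  ((hf.contDiffAt hs).differentiableAt hn).hasDerivAt

lemma ContDiffOn.hasDerivAt_deriv_of_mem_nhds {f : ℝ → ℝ} {s : Set ℝ} {x : ℝ}
    (hf : ContDiffOn ℝ 2 f s) (hs : s ∈ 𝓝 x) : HasDerivAt (deriv f) (deriv (deriv f) x) x := by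
  obtain ⟨t, hts, ht, hxt⟩ := mem_nhds_iff.1 hs
  have hf' : ContDiffOn ℝ 1 (deriv f) t := (hf.mono hts).deriv_of_isOpen ht (by norm_num)
  exact hf'.hasDerivAt_of_mem_nhds one_ne_zero (ht.mem_nhds hxt)

lemma monotoneOn_Ici_of_hasDerivAt_nonneg {f f' : ℝ → ℝ} {a : ℝ}
    (hf : ∀ x ≥ a, HasDerivAt f (f' x) x) (hf' : ∀ x ≥ a, 0 ≤ f' x) : MonotoneOn f (Ici a) := by
  refine monotoneOn_of_hasDerivWithinAt_nonneg (f' := f') (convex_Ici a)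
    (fun x hx => (hf x hx).continuousAt.continuousWithinAt) (fun x hx => ?_) (fun x hx => ?_)
  all_goals rw [interior_Ici] at hx
  exacts [(hf x hx.le).hasDerivWithinAt, hf' x hx.le]

lemma sub_le_sub_of_hasDerivAt_le {f F f' F' : ℝ → ℝ} {a r : ℝ}
    (hf : ∀ x ≥ a, HasDerivAt f (f' x) x) (hF : ∀ x ≥ a, HasDerivAt F (F' x) x)
    (hle : ∀ x ≥ a, f' x ≤ F' x) (hr : a ≤ r) : f r - f a ≤ F r - F a := by
  have := monotoneOn_Ici_of_hasDerivAt_nonneg (fun x hx => (hF x hx).sub (hf x hx))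
    (fun x hx => sub_nonneg.2 (hle x hx)) self_mem_Ici hr hr
  simp only [Pi.sub_apply] at this
  linarith

lemma mul_exp_sub_le_of_le_deriv {f f' : ℝ → ℝ} {a r : ℝ}
    (hf : ∀ x ≥ a, HasDerivAt f (f' x) x) (hle : ∀ x ≥ a, f x ≤ f' x) (hr : a ≤ r) :
    f a * exp (r - a) ≤ f r := by
  have hmono : MonotoneOn (fun x => f x * exp (-x)) (Ici a) :=
    monotoneOn_Ici_of_hasDerivAt_nonneg (fun x hx => (hf x hx).mul (hasDerivAt_neg' x).exp)
      (fun x hx => by nlinarith [hle x hx, exp_pos (-x)])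
  have := mul_le_mul_of_nonneg_right (hmono self_mem_Ici hr hr) (exp_pos r).le
  rwa [mul_assoc, mul_assoc, ← exp_add, ← exp_add, neg_add_cancel, exp_zero, mul_one,
    neg_add_eq_sub] at this

lemma StrictAntiOn.neg_of_tendsto_nhdsGT {f : ℝ → ℝ} {a r : ℝ} (hf : StrictAntiOn f (Ioi a))
    (h0 : Tendsto f (𝓝[>] a) (𝓝 0)) (hr : a < r) : f r < 0 := by
  have hm : a < (a + r) / 2 := by linarith
  have hfm : f ((a + r) / 2) ≤ 0 := by
    refine ge_of_tendsto h0 ?_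
    filter_upwards [Ioo_mem_nhdsGT hm] with x hx
    exact (hf hx.1 hm hx.2).le
  exact (hf hm hr (by linarith)).trans_le hfm

lemma not_integrableOn_Ioi_of_eventually_ge {f : ℝ → ℝ} {a c : ℝ} (hc : 0 < c)
    (hf : ∀ᶠ x in atTop, c ≤ f x) : ¬ IntegrableOn f (Ioi a) := by
  intro hint
  obtain ⟨R, hR⟩ := eventually_atTop.1 hf
  have hconst : IntegrableOn (fun _ => c) (Ioi (max a R)) := by
    refine Integrable.mono' (hint.mono_set (Ioi_subset_Ioi (le_max_left a R)))
      aestronglyMeasurable_const ?_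
    filter_upwards [ae_restrict_mem measurableSet_Ioi] with x hx
    rw [norm_of_nonneg hc.le]
    exact hR x ((le_max_right a R).trans (le_of_lt hx))
  rw [IntegrableOn, integrable_const_iff, isFiniteMeasure_restrict, Real.volume_Ioi] at hconst
  exact hconst.elim hc.ne' (fun h => h rfl)

lemma EReal.eq_top_of_tendsto_of_integrableOn_inv {g : ℝ → ℝ} {Λ : EReal} {a : ℝ}
    (hg : Tendsto (fun x => (g x : EReal)) atTop (𝓝 Λ)) (hpos : ∀ᶠ x in atTop, 0 < g x)
    (hint : IntegrableOn (fun x => (g x)⁻¹) (Ioi a)) : Λ = ⊤ := by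
  by_contra hΛ
  obtain ⟨M, hΛM, -⟩ := EReal.lt_iff_exists_real_btwn.1 (Ne.lt_top hΛ)
  have hlt : ∀ᶠ x in atTop, 0 < g x ∧ g x < M :=
    hpos.and ((hg.eventually (gt_mem_nhds hΛM)).mono fun x hx => EReal.coe_lt_coe_iff.1 hx)
  obtain ⟨x, hx0, hxM⟩ := hlt.exists
  refine not_integrableOn_Ioi_of_eventually_ge (inv_pos.2 (hx0.trans hxM)) ?_ hint
  exact hlt.mono fun x hx => (inv_anti₀ hx.1 hx.2.le)

noncomputable def radialFlux (N : ℕ) (ψ u : ℝ → ℝ) (r : ℝ) : ℝ := ψ r ^ (N - 1) * deriv u r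

def SolvesRadialEq (N : ℕ) (ψ u : ℝ → ℝ) : Prop :=
  ∀ r > (0:ℝ), deriv (deriv u) r + ((N : ℝ) - 1) * (deriv ψ r / ψ r) * deriv u r + exp (u r) = 0

section RadialEquation

variable {N : ℕ} {ψ u : ℝ → ℝ} {ψ' r : ℝ}

lemma hasDerivAt_pow_pred (hN : 1 ≤ N) (hψ : HasDerivAt ψ ψ' r) (hψr : ψ r ≠ 0) :
    HasDerivAt (fun s => ψ s ^ (N - 1)) (((N : ℝ) - 1) * (ψ' / ψ r) * ψ r ^ (N - 1)) r := by
  obtain ⟨k, rfl⟩ := Nat.exists_eq_add_of_le' hN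
  simp only [add_tsub_cancel_right, Nat.cast_add, Nat.cast_one]
  refine (hψ.fun_pow k).congr_deriv ?_
  rcases k with _ | k
  · simp
  · simp only [add_tsub_cancel_right, pow_succ]
    field_simp

lemma hasDerivAt_radialFlux (hN : 1 ≤ N) (hψ : HasDerivAt ψ (deriv ψ r) r) (hψr : ψ r ≠ 0)
    (hu : HasDerivAt (deriv u) (deriv (deriv u) r) r)
    (hode : deriv (deriv u) r + ((N : ℝ) - 1) * (deriv ψ r / ψ r) * deriv u r + exp (u r) = 0) :
    HasDerivAt (radialFlux N ψ u) (-(ψ r ^ (N - 1) * exp (u r))) r := by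
  refine ((hasDerivAt_pow_pred hN hψ hψr).mul hu).congr_deriv ?_
  linear_combination ψ r ^ (N - 1) * hode

lemma tendsto_radialFlux_nhdsGT {a : ℝ} (hN : 2 ≤ N) (hψ : ContinuousWithinAt ψ (Ici a) a)
    (hψa : ψ a = 0) (hu : ContDiffOn ℝ 1 u (Ici a)) :
    Tendsto (radialFlux N ψ u) (𝓝[>] a) (𝓝 0) := by
  have hu' := hu.continuousOn_derivWithin (uniqueDiffOn_Ici a) le_rfl a self_mem_Ici
  have hlim := ((hψ.pow (N - 1)).mul hu').tendsto.mono_left (nhdsWithin_mono a Ioi_subset_Ici_self)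
  simp only [Pi.mul_apply, Pi.pow_apply, hψa, zero_pow (by omega : N - 1 ≠ 0), zero_mul] at hlim
  refine hlim.congr' ?_
  filter_upwards [self_mem_nhdsWithin] with x hx
  rw [radialFlux, Pi.mul_apply, Pi.pow_apply, derivWithin_of_mem_nhds (Ici_mem_nhds hx)]

lemma radialFlux_neg (hN : 2 ≤ N) (hψ : ContDiffOn ℝ 2 ψ (Ici 0))
    (hψpos : ∀ r > (0:ℝ), ψ r > 0) (hψ0 : ψ 0 = 0) (hu : ContDiffOn ℝ 2 u (Ici 0))
    (hode : SolvesRadialEq N ψ u) (hr : 0 < r) : radialFlux N ψ u r < 0 := by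
  have hderiv : ∀ x > (0:ℝ), HasDerivAt (radialFlux N ψ u) (-(ψ x ^ (N - 1) * exp (u x))) x :=
    fun x hx => hasDerivAt_radialFlux (by omega)
      (hψ.hasDerivAt_of_mem_nhds two_ne_zero (Ici_mem_nhds hx)) (hψpos x hx).ne'
      (hu.hasDerivAt_deriv_of_mem_nhds (Ici_mem_nhds hx)) (hode x hx)
  have hanti : StrictAntiOn (radialFlux N ψ u) (Ioi 0) := by
    refine strictAntiOn_of_hasDerivWithinAt_neg (f' := fun x => -(ψ x ^ (N - 1) * exp (u x)))
      (convex_Ioi 0)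
      (fun x hx => (hderiv x hx).continuousAt.continuousWithinAt) (fun x hx => ?_) (fun x hx => ?_)
    all_goals rw [interior_Ioi] at hx
    · exact (hderiv x hx).hasDerivWithinAt
    · exact neg_neg_of_pos (mul_pos (pow_pos (hψpos x hx) _) (exp_pos _))
  exact hanti.neg_of_tendsto_nhdsGT (tendsto_radialFlux_nhdsGT hN
    (hψ.continuousOn.continuousWithinAt self_mem_Ici) hψ0 (hu.of_le one_le_two)) hr

lemma deriv_neg_of_solvesRadialEq (hN : 2 ≤ N) (hψ : ContDiffOn ℝ 2 ψ (Ici 0))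
    (hψpos : ∀ r > (0:ℝ), ψ r > 0) (hψ0 : ψ 0 = 0) (hu : ContDiffOn ℝ 2 u (Ici 0))
    (hode : SolvesRadialEq N ψ u) (hr : 0 < r) : deriv u r < 0 :=
  neg_of_mul_neg_right (radialFlux_neg hN hψ hψpos hψ0 hu hode hr) (pow_pos (hψpos r hr) _).le

lemma strictAntiOn_of_solvesRadialEq (hN : 2 ≤ N) (hψ : ContDiffOn ℝ 2 ψ (Ici 0))
    (hψpos : ∀ r > (0:ℝ), ψ r > 0) (hψ0 : ψ 0 = 0) (hu : ContDiffOn ℝ 2 u (Ici 0))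
    (hode : SolvesRadialEq N ψ u) : StrictAntiOn u (Ici 0) :=
  strictAntiOn_of_deriv_neg (convex_Ici 0) hu.continuousOn fun x hx => by
    rw [interior_Ici] at hx
    exact deriv_neg_of_solvesRadialEq hN hψ hψpos hψ0 hu hode hx

lemma hasDerivAt_pow_pred_div_logDeriv (hN : 1 ≤ N) (hψ : HasDerivAt ψ (deriv ψ r) r)
    (hψ' : DifferentiableAt ℝ (deriv ψ) r) (hψr : ψ r ≠ 0) (hψ'r : deriv ψ r ≠ 0) :
    HasDerivAt (fun s => ψ s ^ (N - 1) / logDeriv ψ s)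
      (ψ r ^ (N - 1) * ((N : ℝ) - 1 - deriv (fun s => log (logDeriv ψ s)) r / logDeriv ψ r)) r := by
  have hg : HasDerivAt (logDeriv ψ) (deriv (logDeriv ψ) r) r :=
    (hψ'.div hψ.differentiableAt hψr).hasDerivAt
  have hgr : logDeriv ψ r ≠ 0 := div_ne_zero hψ'r hψr
  rw [deriv.log hg.differentiableAt hgr]
  refine ((hasDerivAt_pow_pred hN hψ hψr).div hg hgr).congr_deriv ?_
  rw [logDeriv_apply] at hgr ⊢
  field_simp

lemma neg_radialFlux_le (hN : 2 ≤ N) (hψ : ContDiffOn ℝ 2 ψ (Ici 0))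
    (hψpos : ∀ r > (0:ℝ), ψ r > 0) (hψ'pos : ∀ r > (0:ℝ), deriv ψ r > 0)
    (hu : ContDiffOn ℝ 2 u (Ici 0)) (hode : SolvesRadialEq N ψ u) {R C α : ℝ} (hR : 0 < R)
    (hbound : ∀ x ≥ R,
      2 * C + 1 ≤ logDeriv ψ x ∧ |deriv (fun s => log (logDeriv ψ s)) x| ≤ C)
    (hua : ∀ x > (0:ℝ), u x ≤ α) (hr : R ≤ r) :
    -radialFlux N ψ u r ≤ -radialFlux N ψ u R + 2 * exp α * (ψ r ^ (N - 1) / logDeriv ψ r) := by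
  have hx0 : ∀ x ≥ R, 0 < x := fun x hx => hR.trans_le hx
  have hcmp := sub_le_sub_of_hasDerivAt_le
    (f := fun x => -radialFlux N ψ u x)
    (F := fun x => 2 * exp α * (ψ x ^ (N - 1) / logDeriv ψ x))
    (fun x hx => (hasDerivAt_radialFlux (by omega)
      (hψ.hasDerivAt_of_mem_nhds two_ne_zero (Ici_mem_nhds (hx0 x hx))) (hψpos x (hx0 x hx)).ne'
      (hu.hasDerivAt_deriv_of_mem_nhds (Ici_mem_nhds (hx0 x hx))) (hode x (hx0 x hx))).neg)
    (fun x hx => (hasDerivAt_pow_pred_div_logDeriv (by omega)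
      (hψ.hasDerivAt_of_mem_nhds two_ne_zero (Ici_mem_nhds (hx0 x hx)))
      (hψ.hasDerivAt_deriv_of_mem_nhds (Ici_mem_nhds (hx0 x hx))).differentiableAt
      (hψpos x (hx0 x hx)).ne' (hψ'pos x (hx0 x hx)).ne').const_mul (2 * exp α))
    (fun x hx => ?_) hr
  · have hgR : 0 < logDeriv ψ R := div_pos (hψ'pos R hR) (hψpos R hR)
    have hhR : 0 ≤ 2 * exp α * (ψ R ^ (N - 1) / logDeriv ψ R) :=
      mul_nonneg (by positivity) (div_nonneg (pow_pos (hψpos R hR) _).le hgR.le)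
    linarith
  obtain ⟨hg, hL⟩ := hbound x hx
  have hC0 : 0 ≤ C := (abs_nonneg _).trans hL
  have hP : 0 < ψ x ^ (N - 1) := pow_pos (hψpos x (hx0 x hx)) _
  have hN' : (1 : ℝ) ≤ N - 1 := le_sub_iff_add_le.2 (by norm_cast)
  have hLg : deriv (fun s => log (logDeriv ψ s)) x / logDeriv ψ x ≤ 1 / 2 := by
    rw [div_le_iff₀ (by linarith)]
    linarith [le_abs_self (deriv (fun s => log (logDeriv ψ s)) x)]
  have hexp : exp (u x) ≤ exp α := exp_le_exp.2 (hua x (hx0 x hx))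
  calc -(-(ψ x ^ (N - 1) * exp (u x))) ≤ 2 * exp α * (ψ x ^ (N - 1) * (1 / 2)) := by
        nlinarith
    _ ≤ 2 * exp α * (ψ x ^ (N - 1) *
        ((N : ℝ) - 1 - deriv (fun s => log (logDeriv ψ s)) x / logDeriv ψ x)) := by
        gcongr
        linarith

lemma pow_pred_mul_exp_sub_le {R : ℝ} (hN : 2 ≤ N) (hψ : ∀ x ≥ R, HasDerivAt ψ (deriv ψ x) x)
    (hψpos : ∀ x ≥ R, 0 < ψ x) (hg : ∀ x ≥ R, 1 ≤ logDeriv ψ x) (hr : R ≤ r) :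
    ψ R ^ (N - 1) * exp (r - R) ≤ ψ r ^ (N - 1) := by
  refine mul_exp_sub_le_of_le_deriv
    (fun x hx => hasDerivAt_pow_pred (by omega) (hψ x hx) (hψpos x hx).ne') (fun x hx => ?_) hr
  have hN' : (1 : ℝ) ≤ N - 1 := le_sub_iff_add_le.2 (by norm_cast)
  have h1 : 1 ≤ ((N : ℝ) - 1) * (deriv ψ x / ψ x) := by
    rw [← logDeriv_apply]
    nlinarith [hg x hx]
  nlinarith [pow_pos (hψpos x hx) (N - 1)]

lemma integrableOn_deriv_of_solvesRadialEq (hN : 2 ≤ N) (hψ : ContDiffOn ℝ 2 ψ (Ici 0))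
    (hψpos : ∀ r > (0:ℝ), ψ r > 0) (hψ0 : ψ 0 = 0) (hψ'pos : ∀ r > (0:ℝ), deriv ψ r > 0)
    (hg : Tendsto (logDeriv ψ) atTop atTop) {C : ℝ}
    (hC : ∀ᶠ x in atTop, |deriv (fun s => log (logDeriv ψ s)) x| ≤ C)
    (hu : ContDiffOn ℝ 2 u (Ici 0)) (hode : SolvesRadialEq N ψ u)
    (hint : IntegrableOn (fun r => ψ r / deriv ψ r) (Ioi 0)) :
    ∃ R > 0, IntegrableOn (deriv u) (Ioi R) := by
  obtain ⟨R₀, hR₀⟩ := eventually_atTop.1 ((hg.eventually_ge_atTop (2 * C + 1)).and hC)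
  set R := max R₀ 1
  have hR : 0 < R := zero_lt_one.trans_le (le_max_right _ _)
  have hbound : ∀ x ≥ R, 2 * C + 1 ≤ logDeriv ψ x ∧ |deriv (fun s => log (logDeriv ψ s)) x| ≤ C :=
    fun x hx => hR₀ x ((le_max_left _ _).trans hx)
  have hx0 : ∀ x ≥ R, 0 < x := fun x hx => hR.trans_le hx
  have hua : ∀ x > (0:ℝ), u x ≤ u 0 := fun x hx =>
    (strictAntiOn_of_solvesRadialEq hN hψ hψpos hψ0 hu hode self_mem_Ici hx.le hx).le
  have hgrowth : ∀ x ≥ R, ψ R ^ (N - 1) * exp (x - R) ≤ ψ x ^ (N - 1) := fun x hx =>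
    pow_pred_mul_exp_sub_le hN
      (fun y hy => hψ.hasDerivAt_of_mem_nhds two_ne_zero (Ici_mem_nhds (hx0 y hy)))
      (fun y hy => hψpos y (hx0 y hy))
      (fun y hy => by linarith [(hbound y hy).1, (abs_nonneg _).trans (hbound y hy).2]) hx
  set K := -radialFlux N ψ u R / ψ R ^ (N - 1) * exp R with hK
  refine ⟨R, hR, Integrable.mono'
    (g := fun x => 2 * exp (u 0) * (ψ x / deriv ψ x) + K * exp (-x)) ?_ ?_ ?_⟩
  · exact ((hint.mono_set (Ioi_subset_Ioi hR.le)).const_mul _).add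
      (by simpa using (exp_neg_integrableOn_Ioi R one_pos).const_mul K)
  · exact ContinuousOn.aestronglyMeasurable (fun x hx =>
      (hu.hasDerivAt_deriv_of_mem_nhds (Ici_mem_nhds (hR.trans hx))).continuousAt.continuousWithinAt)
      measurableSet_Ioi
  filter_upwards [ae_restrict_mem measurableSet_Ioi] with x hx
  have hx' : R ≤ x := le_of_lt hx
  have hP : 0 < ψ x ^ (N - 1) := pow_pos (hψpos x (hx0 x hx')) _
  have hPR : 0 < ψ R ^ (N - 1) := pow_pos (hψpos R hR) _
  have hw := neg_radialFlux_le hN hψ hψpos hψ'pos hu hode hR hbound hua hx'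
  have hwR : 0 ≤ -radialFlux N ψ u R := (neg_pos.2 (radialFlux_neg hN hψ hψpos hψ0 hu hode hR)).le
  rw [Real.norm_eq_abs, abs_of_neg (deriv_neg_of_solvesRadialEq hN hψ hψpos hψ0 hu hode (hx0 x hx'))]
  have hh : ψ x ^ (N - 1) / logDeriv ψ x = ψ x ^ (N - 1) * (ψ x / deriv ψ x) := by
    rw [logDeriv_apply, div_div_eq_mul_div, mul_div_assoc]
  rw [radialFlux, hh] at hw
  have hdecay : -radialFlux N ψ u R / ψ x ^ (N - 1) ≤ K * exp (-x) :=
    calc -radialFlux N ψ u R / ψ x ^ (N - 1)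
        ≤ -radialFlux N ψ u R / (ψ R ^ (N - 1) * exp (x - R)) :=
          div_le_div_of_nonneg_left hwR (by positivity) (hgrowth x hx')
      _ = K * exp (-x) := by
          rw [hK, exp_sub, exp_neg]
          field_simp
  have hdiv : -deriv u x ≤ -radialFlux N ψ u R / ψ x ^ (N - 1)
      + 2 * exp (u 0) * (ψ x / deriv ψ x) := by
    rw [div_add' _ _ _ hP.ne', le_div_iff₀ hP]
    linarith
  linarith

end RadialEquation

theorem statement7_general (N : ℕ) (hN : 2 ≤ N) (ψ : ℝ → ℝ)
    (hψC2 : ContDiffOn ℝ 2 ψ (Ici 0))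
    (hψpos : ∀ r > (0:ℝ), ψ r > 0)
    (hψ0 : ψ 0 = 0)
    (hψ'pos : ∀ r > (0:ℝ), deriv ψ r > 0)
    (Λ : EReal)
    (hA3 : Filter.Tendsto (fun r => ((deriv ψ r / ψ r : ℝ) : EReal)) Filter.atTop (nhds Λ))
    (hA4 : Λ = ⊤ → ∃ C : ℝ, ∀ᶠ r in Filter.atTop,
      |deriv (fun s => Real.log (deriv ψ s / ψ s)) r| ≤ C)
    (α : ℝ) (u : ℝ → ℝ)
    (huC2 : ContDiffOn ℝ 2 u (Ici 0)) (hu0 : u 0 = α)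
    (hode : ∀ r > (0:ℝ), deriv (deriv u) r + ((N : ℝ) - 1) * (deriv ψ r / ψ r) * deriv u r
      + Real.exp (u r) = 0)
    (hint : IntegrableOn (fun r => ψ r / deriv ψ r) (Ioi (0:ℝ)))
    : ∃ l : ℝ, l < α ∧ Tendsto u atTop (nhds l) := by
  have hΛ : Λ = ⊤ := EReal.eq_top_of_tendsto_of_integrableOn_inv hA3
    ((eventually_gt_atTop 0).mono fun r hr => div_pos (hψ'pos r hr) (hψpos r hr))
    (by simpa only [inv_div] using hint)
  have hg : Tendsto (logDeriv ψ) atTop atTop := by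
    rw [hΛ] at hA3
    exact EReal.tendsto_coe_nhds_top_iff.1 hA3
  obtain ⟨C, hC⟩ := hA4 hΛ
  obtain ⟨R, hR, hu'int⟩ := integrableOn_deriv_of_solvesRadialEq hN hψC2 hψpos hψ0 hψ'pos hg hC
    huC2 hode hint
  have hlim := tendsto_limUnder_of_hasDerivAt_of_integrableOn_Ioi
    (fun x hx => huC2.hasDerivAt_of_mem_nhds two_ne_zero (Ici_mem_nhds (hR.trans hx))) hu'int
  have hanti := strictAntiOn_of_solvesRadialEq hN hψC2 hψpos hψ0 huC2 hode
  refine ⟨limUnder atTop u, ?_, hlim⟩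
  calc limUnder atTop u ≤ u R := by
        refine le_of_tendsto hlim ?_
        filter_upwards [eventually_ge_atTop R] with x hx
        exact hanti.antitoneOn (mem_Ici.2 hR.le) (mem_Ici.2 (hR.le.trans hx)) hx
    _ < u 0 := hanti self_mem_Ici (mem_Ici.2 hR.le) hR
    _ = α := hu0

theorem statement7 (N : ℕ) (hN : 2 ≤ N) (ψ : ℝ → ℝ)
    (hψC2 : ContDiffOn ℝ 2 ψ (Ici 0))
    (hψpos : ∀ r > (0:ℝ), ψ r > 0)
    (hψ0 : ψ 0 = 0) (hψ''0 : deriv (deriv ψ) 0 = 0) (hψ'0 : deriv ψ 0 = 1)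
    (hψ'pos : ∀ r > (0:ℝ), deriv ψ r > 0)
    (Λ : EReal) (hΛpos : 0 < Λ)
    (hA3 : Filter.Tendsto (fun r => ((deriv ψ r / ψ r : ℝ) : EReal)) Filter.atTop (nhds Λ))
    (hA4 : Λ = ⊤ → ∃ C : ℝ, ∀ᶠ r in Filter.atTop,
      |deriv (fun s => Real.log (deriv ψ s / ψ s)) r| ≤ C)
    (α : ℝ) (u : ℝ → ℝ)
    (huC2 : ContDiffOn ℝ 2 u (Ici 0)) (hu0 : u 0 = α) (hu'0 : deriv u 0 = 0)
    (hode : ∀ r > (0:ℝ), deriv (deriv u) r + ((N : ℝ) - 1) * (deriv ψ r / ψ r) * deriv u r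
      + Real.exp (u r) = 0)
    (hint : IntegrableOn (fun r => ψ r / deriv ψ r) (Ioi (0:ℝ)))
    : ∃ l : ℝ, l < α ∧ Tendsto u atTop (nhds l) :=
  statement7_general N hN ψ hψC2 hψpos hψ0 hψ'pos Λ hA3 hA4 α u huC2 hu0 hode hint
end

section
/- If u_α is an unstable solution of the initial value problem for some α ∈ ℝ, then for every β > α the solution u_β intersects u_α at least once: there exists r > 0 such that u_β(r) = u_α(r). -/
open Set Real Filter MeasureTheory

lemma stable_of_pos (N : ℕ) (hN : 2 ≤ N) (ψ uα uβ : ℝ → ℝ)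
    (hψC2 : ContDiffOn ℝ 2 ψ (Ici 0)) (hψpos : ∀ r > (0:ℝ), ψ r > 0) (hψ0 : ψ 0 = 0)
    (huαC2 : ContDiffOn ℝ 2 uα (Ici 0)) (huβC2 : ContDiffOn ℝ 2 uβ (Ici 0))
    (hodeα : ∀ r > (0:ℝ), deriv (deriv uα) r + ((N : ℝ) - 1) * (deriv ψ r / ψ r) * deriv uα r
      + Real.exp (uα r) = 0)
    (hodeβ : ∀ r > (0:ℝ), deriv (deriv uβ) r + ((N : ℝ) - 1) * (deriv ψ r / ψ r) * deriv uβ r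
      + Real.exp (uβ r) = 0)
    (hwpos : ∀ r ≥ (0:ℝ), uα r < uβ r) :
    ∀ χ : ℝ → ℝ, ContDiff ℝ (⊤ : ℕ∞) χ → HasCompactSupport χ →
    0 ≤ (∫ r in Set.Ioi (0:ℝ), (deriv χ r) ^ 2 * ψ r ^ (N - 1)) -
        ∫ r in Set.Ioi (0:ℝ), Real.exp (uα r) * (χ r) ^ 2 * ψ r ^ (N - 1) := by
  intro χ hχ hχs
  set n : ℕ := N - 1 with hn
  have hn1 : 1 ≤ n := le_tsub_of_add_le_left hN
  have hncast : (n : ℝ) = (N : ℝ) - 1 := by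
    rw [hn, Nat.cast_sub (by omega)]; norm_num
  obtain ⟨R, hR0, hRχ⟩ := hχs.exists_pos_le_norm
  -- basic functions
  set w : ℝ → ℝ := fun r => uβ r - uα r with hw
  set W : ℝ → ℝ := fun r => derivWithin uβ (Ici 0) r - derivWithin uα (Ici 0) r with hW
  set f : ℝ → ℝ := fun r => χ r ^ 2 / w r with hf
  set g : ℝ → ℝ := fun r => W r * ψ r ^ n with hg
  set F : ℝ → ℝ := fun r => f r * g r with hF
  set F' : ℝ → ℝ := fun r =>
    (2 * χ r * deriv χ r * w r - χ r ^ 2 * W r) / (w r) ^ 2 * g r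
      - f r * (Real.exp (uβ r) - Real.exp (uα r)) * ψ r ^ n with hF'
  set H : ℝ → ℝ := fun r => (deriv χ r) ^ 2 * ψ r ^ n
      - Real.exp (uα r) * (χ r) ^ 2 * ψ r ^ n with hH
  have hwpos' : ∀ r ∈ Ici (0:ℝ), 0 < w r := fun r hr => sub_pos.2 (hwpos r hr)
  have hwne : ∀ r ∈ Ici (0:ℝ), w r ≠ 0 := fun r hr => (hwpos' r hr).ne'
  -- continuity
  have hψc : ContinuousOn ψ (Ici 0) := hψC2.continuousOn
  have hwc : ContinuousOn w (Ici 0) := huβC2.continuousOn.sub huαC2.continuousOn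
  have hWc : ContinuousOn W (Ici 0) :=
    (huβC2.continuousOn_derivWithin (uniqueDiffOn_Ici 0) (by norm_num)).sub
      (huαC2.continuousOn_derivWithin (uniqueDiffOn_Ici 0) (by norm_num))
  have hχc : Continuous χ := hχ.continuous
  have hχ'c : Continuous (deriv χ) := hχ.continuous_deriv (by simp)
  have hfc : ContinuousOn f (Ici 0) :=
    ((hχc.pow 2).continuousOn).div hwc hwne
  have hgc : ContinuousOn g (Ici 0) := hWc.mul (hψc.pow n)
  have hFc : ContinuousOn F (Ici 0) := hfc.mul hgc
  have hF'c : ContinuousOn F' (Ici 0) := by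
    apply ContinuousOn.sub
    · exact (ContinuousOn.div (((continuousOn_const.mul hχc.continuousOn).mul
        hχ'c.continuousOn).mul hwc |>.sub ((hχc.pow 2).continuousOn.mul hWc))
        (hwc.pow 2) (fun r hr => pow_ne_zero _ (hwne r hr))).mul hgc
    · exact (hfc.mul ((Real.continuous_exp.comp_continuousOn huβC2.continuousOn).sub
        (Real.continuous_exp.comp_continuousOn huαC2.continuousOn))).mul (hψc.pow n)
  have hψnn : ∀ r ∈ Ici (0:ℝ), 0 ≤ ψ r := by
    intro r hr
    rcases eq_or_lt_of_le (mem_Ici.mp hr : (0:ℝ) ≤ r) with h | h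
    · simp [← h, hψ0]
    · exact (hψpos r h).le
  -- derivative of F at interior points
  have hderiv : ∀ x ∈ Ioo (0:ℝ) R, HasDerivAt F (F' x) x := by
    intro x hx
    have hx0 : (0:ℝ) < x := hx.1
    have hmem : Ici (0:ℝ) ∈ nhds x := Ici_mem_nhds hx0
    have hψx : ψ x ≠ 0 := (hψpos x hx0).ne'
    have hdβ : HasDerivAt uβ (deriv uβ x) x :=
      ((huβC2.differentiableOn (by norm_num)).differentiableAt hmem).hasDerivAt
    have hdα : HasDerivAt uα (deriv uα x) x :=
      ((huαC2.differentiableOn (by norm_num)).differentiableAt hmem).hasDerivAt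
    have hdψ : HasDerivAt ψ (deriv ψ x) x :=
      ((hψC2.differentiableOn (by norm_num)).differentiableAt hmem).hasDerivAt
    have hd2β : HasDerivAt (deriv uβ) (deriv (deriv uβ) x) x := by
      have h1 : ContDiffOn ℝ 1 (deriv uβ) (Ioi 0) :=
        (huβC2.mono Ioi_subset_Ici_self).deriv_of_isOpen isOpen_Ioi (by norm_num)
      exact ((h1.differentiableOn (by norm_num)).differentiableAt
        (isOpen_Ioi.mem_nhds hx0)).hasDerivAt
    have hd2α : HasDerivAt (deriv uα) (deriv (deriv uα) x) x := by
      have h1 : ContDiffOn ℝ 1 (deriv uα) (Ioi 0) :=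
        (huαC2.mono Ioi_subset_Ici_self).deriv_of_isOpen isOpen_Ioi (by norm_num)
      exact ((h1.differentiableOn (by norm_num)).differentiableAt
        (isOpen_Ioi.mem_nhds hx0)).hasDerivAt
    have hWev : W =ᶠ[nhds x] (fun r => deriv uβ r - deriv uα r) := by
      filter_upwards [isOpen_Ioi.mem_nhds hx0] with r hr
      simp only [hW]
      rw [derivWithin_of_mem_nhds (Ici_mem_nhds hr), derivWithin_of_mem_nhds (Ici_mem_nhds hr)]
    have hWx : W x = deriv uβ x - deriv uα x := by
      simp only [hW]
      rw [derivWithin_of_mem_nhds hmem, derivWithin_of_mem_nhds hmem]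
    have hdw : HasDerivAt w (W x) x := by rw [hWx]; exact hdβ.sub hdα
    have hdχ : HasDerivAt χ (deriv χ x) x :=
      ((hχ.differentiable (by simp)) x).hasDerivAt
    have hdf : HasDerivAt f ((2 * χ x * deriv χ x * w x - χ x ^ 2 * W x) / (w x) ^ 2) x := by
      have h1 : HasDerivAt (fun r => χ r ^ 2) (2 * χ x * deriv χ x) x := by
        have := hdχ.fun_pow 2
        simpa [mul_comm, mul_assoc] using this
      exact h1.div hdw (hwne x hx0.le)
    have hdW : HasDerivAt W (deriv (deriv uβ) x - deriv (deriv uα) x) x :=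
      (hd2β.sub hd2α).congr_of_eventuallyEq hWev
    have hdψn : HasDerivAt (fun r => ψ r ^ n) ((n : ℝ) * ψ x ^ (n - 1) * deriv ψ x) x :=
      hdψ.pow n
    have hdg : HasDerivAt g (-(Real.exp (uβ x) - Real.exp (uα x)) * ψ x ^ n) x := by
      have h2 : HasDerivAt (fun r => W r * ψ r ^ n) _ x := hdW.fun_mul hdψn
      convert h2 using 1
      have eβ := hodeβ x hx0
      have eα := hodeα x hx0
      have hβ2 : deriv (deriv uβ) x
          = -(((N : ℝ) - 1) * (deriv ψ x / ψ x) * deriv uβ x) - Real.exp (uβ x) := by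
        linarith
      have hα2 : deriv (deriv uα) x
          = -(((N : ℝ) - 1) * (deriv ψ x / ψ x) * deriv uα x) - Real.exp (uα x) := by
        linarith
      obtain ⟨m, hm⟩ : ∃ m, n = m + 1 := ⟨n - 1, (Nat.succ_pred_eq_of_pos hn1).symm⟩
      rw [hβ2, hα2, hWx, ← hncast, hm]
      simp only [Nat.add_sub_cancel]
      field_simp
      ring
    have h3 : HasDerivAt (fun r => f r * g r) _ x := hdf.fun_mul hdg
    convert h3 using 1
    simp only [hF', hg, hf]
    ring
  -- boundary values
  have hχR : ∀ r : ℝ, R ≤ r → χ r = 0 := by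
    intro r hr
    exact hRχ r (by rw [Real.norm_eq_abs]; exact le_trans hr (le_abs_self r))
  have hF0 : F 0 = 0 := by
    simp only [hF, hg, hψ0]
    rw [zero_pow (by omega : n ≠ 0)]
    ring
  have hFR : F R = 0 := by
    simp only [hF, hf, hχR R le_rfl]
    norm_num
  -- integrability on [0, R]
  have hIccsub : Icc (0:ℝ) R ⊆ Ici 0 := Icc_subset_Ici_self
  have hiF' : IntervalIntegrable F' volume 0 R :=
    (hF'c.mono hIccsub).intervalIntegrable_of_Icc hR0.le
  have hHc : ContinuousOn H (Ici 0) := by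
    apply ContinuousOn.sub
    · exact ((hχ'c.pow 2).continuousOn).mul (hψc.pow n)
    · exact ((Real.continuous_exp.comp_continuousOn huαC2.continuousOn).mul
        ((hχc.pow 2).continuousOn)).mul (hψc.pow n)
  have hiH : IntervalIntegrable H volume 0 R :=
    (hHc.mono hIccsub).intervalIntegrable_of_Icc hR0.le
  -- the integral of F' is zero
  have hintF' : ∫ y in (0:ℝ)..R, F' y = 0 := by
    rw [intervalIntegral.integral_eq_sub_of_hasDeriv_right_of_le hR0.le
      (hFc.mono hIccsub) (fun x hx => (hderiv x hx).hasDerivWithinAt) hiF']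
    rw [hF0, hFR]; ring
  -- pointwise inequality F' ≤ H on [0, R]
  have hle : ∀ x ∈ Icc (0:ℝ) R, F' x ≤ H x := by
    intro x hx
    have hx0 : (0:ℝ) ≤ x := hx.1
    have hwx : 0 < w x := hwpos' x hx0
    have hψn : (0:ℝ) ≤ ψ x ^ n := pow_nonneg (hψnn x hx0) n
    simp only [hF', hH, hg, hf]
    have h1 : (2 * χ x * deriv χ x * w x - χ x ^ 2 * W x) / w x ^ 2 * (W x * ψ x ^ n)
        ≤ deriv χ x ^ 2 * ψ x ^ n := by
      have key : (2 * χ x * deriv χ x * w x - χ x ^ 2 * W x) / w x ^ 2 * W x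
          ≤ deriv χ x ^ 2 := by
        rw [div_mul_eq_mul_div, div_le_iff₀ (by positivity : (0:ℝ) < w x ^ 2)]
        nlinarith [sq_nonneg (deriv χ x * w x - χ x * W x)]
      calc (2 * χ x * deriv χ x * w x - χ x ^ 2 * W x) / w x ^ 2 * (W x * ψ x ^ n)
          = ((2 * χ x * deriv χ x * w x - χ x ^ 2 * W x) / w x ^ 2 * W x) * ψ x ^ n := by
            ring
        _ ≤ deriv χ x ^ 2 * ψ x ^ n := mul_le_mul_of_nonneg_right key hψn
    have h2 : Real.exp (uα x) * χ x ^ 2 * ψ x ^ n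
        ≤ χ x ^ 2 / w x * (Real.exp (uβ x) - Real.exp (uα x)) * ψ x ^ n := by
      have hconv : Real.exp (uα x) * w x ≤ Real.exp (uβ x) - Real.exp (uα x) := by
        have h4 : uβ x = uα x + w x := by simp [hw]
        rw [h4, Real.exp_add]
        nlinarith [Real.add_one_le_exp (w x), Real.exp_pos (uα x)]
      have hfnn : (0:ℝ) ≤ χ x ^ 2 / w x := by positivity
      have h5 : χ x ^ 2 / w x * (Real.exp (uα x) * w x)
          ≤ χ x ^ 2 / w x * (Real.exp (uβ x) - Real.exp (uα x)) :=
        mul_le_mul_of_nonneg_left hconv hfnn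
      have h6 : χ x ^ 2 / w x * (Real.exp (uα x) * w x) = Real.exp (uα x) * χ x ^ 2 := by
        field_simp
      rw [h6] at h5
      exact mul_le_mul_of_nonneg_right h5 hψn
    linarith
  have hmono : (0:ℝ) ≤ ∫ y in (0:ℝ)..R, H y := by
    have h7 := intervalIntegral.integral_mono_on hR0.le hiF' hiH hle
    linarith
  -- identify the interval integral with the set integrals
  have hsplit : ∀ h : ℝ → ℝ, ContinuousOn h (Ici 0) → (∀ r, R < r → h r = 0) →
      (IntegrableOn h (Ioi 0) volume ∧ ∫ r in Ioi (0:ℝ), h r = ∫ y in (0:ℝ)..R, h y) := by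
    intro h hc hz
    have hzero : EqOn h 0 (Ioi R) := fun r hr => hz r hr
    have hint1 : IntegrableOn h (Ioc 0 R) volume :=
      ((hc.mono hIccsub).integrableOn_Icc).mono_set Ioc_subset_Icc_self
    have hint2 : IntegrableOn h (Ioi R) volume :=
      (integrableOn_zero).congr_fun (fun r hr => (hz r hr).symm) measurableSet_Ioi
    have hun : Ioc (0:ℝ) R ∪ Ioi R = Ioi 0 := Ioc_union_Ioi_eq_Ioi hR0.le
    constructor
    · rw [← hun]; exact hint1.union hint2
    · rw [← hun, setIntegral_union (Ioc_disjoint_Ioi le_rfl) measurableSet_Ioi hint1 hint2]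
      rw [setIntegral_congr_fun measurableSet_Ioi hzero]
      simp [intervalIntegral.integral_of_le hR0.le]
  have hz1 : ∀ r, R < r → (deriv χ r) ^ 2 * ψ r ^ n = 0 := by
    intro r hr
    have : deriv χ r = 0 := by
      have hev : χ =ᶠ[nhds r] (fun _ => (0:ℝ)) := by
        filter_upwards [isOpen_Ioi.mem_nhds hr] with s hs
        exact hχR s (le_of_lt hs)
      rw [hev.deriv_eq]
      exact deriv_const r 0
    rw [this]; ring
  have hz2 : ∀ r, R < r → Real.exp (uα r) * (χ r) ^ 2 * ψ r ^ n = 0 := by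
    intro r hr
    rw [hχR r hr.le]; ring
  have hc1 : ContinuousOn (fun r => (deriv χ r) ^ 2 * ψ r ^ n) (Ici 0) :=
    ((hχ'c.pow 2).continuousOn).mul (hψc.pow n)
  have hc2 : ContinuousOn (fun r => Real.exp (uα r) * (χ r) ^ 2 * ψ r ^ n) (Ici 0) :=
    ((Real.continuous_exp.comp_continuousOn huαC2.continuousOn).mul
      ((hχc.pow 2).continuousOn)).mul (hψc.pow n)
  obtain ⟨hI1, hE1⟩ := hsplit _ hc1 hz1
  obtain ⟨hI2, hE2⟩ := hsplit _ hc2 hz2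
  rw [hE1, hE2, ← intervalIntegral.integral_sub
    ((hc1.mono hIccsub).intervalIntegrable_of_Icc hR0.le)
    ((hc2.mono hIccsub).intervalIntegrable_of_Icc hR0.le)]
  exact hmono




open Set Real Filter MeasureTheory

/-- A solution `u` of `-Δ_g u = e^u` is stable if the quadratic form of the
linearized operator is nonnegative on smooth compactly supported radial test functions. -/
def IsStableSolution (N : ℕ) (ψ u : ℝ → ℝ) : Prop :=
  ∀ χ : ℝ → ℝ, ContDiff ℝ (⊤ : ℕ∞) χ → HasCompactSupport χ →
    0 ≤ (∫ r in Set.Ioi (0:ℝ), (deriv χ r) ^ 2 * ψ r ^ (N - 1)) -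
        ∫ r in Set.Ioi (0:ℝ), Real.exp (u r) * (χ r) ^ 2 * ψ r ^ (N - 1)

theorem statement10 (N : ℕ) (hN : 2 ≤ N) (ψ : ℝ → ℝ)
    (hψC2 : ContDiffOn ℝ 2 ψ (Ici 0))
    (hψpos : ∀ r > (0:ℝ), ψ r > 0)
    (hψ0 : ψ 0 = 0) (hψ''0 : deriv (deriv ψ) 0 = 0) (hψ'0 : deriv ψ 0 = 1)
    (hψ'pos : ∀ r > (0:ℝ), deriv ψ r > 0)
    (Λ : EReal) (hΛpos : 0 < Λ)
    (hA3 : Filter.Tendsto (fun r => ((deriv ψ r / ψ r : ℝ) : EReal)) Filter.atTop (nhds Λ))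
    (α β : ℝ) (hβα : β > α) (uα uβ : ℝ → ℝ)
    (huαC2 : ContDiffOn ℝ 2 uα (Ici 0)) (huα0 : uα 0 = α) (huα'0 : deriv uα 0 = 0)
    (hodeα : ∀ r > (0:ℝ), deriv (deriv uα) r + ((N : ℝ) - 1) * (deriv ψ r / ψ r) * deriv uα r
      + Real.exp (uα r) = 0)
    (huβC2 : ContDiffOn ℝ 2 uβ (Ici 0)) (huβ0 : uβ 0 = β) (huβ'0 : deriv uβ 0 = 0)
    (hodeβ : ∀ r > (0:ℝ), deriv (deriv uβ) r + ((N : ℝ) - 1) * (deriv ψ r / ψ r) * deriv uβ r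
      + Real.exp (uβ r) = 0)
    (hunstable : ¬ IsStableSolution N ψ uα)
    : ∃ r > (0:ℝ), uβ r = uα r := by
  by_contra hcon
  push_neg at hcon
  apply hunstable
  intro χ hχ hχs
  have hwpos : ∀ r ≥ (0:ℝ), uα r < uβ r := by
    intro r hr
    rcases eq_or_lt_of_le hr with h | h
    · rw [← h, huα0, huβ0]
      exact hβα
    · by_contra hle
      push_neg at hle
      have hne := hcon r h
      have hlt : uβ r - uα r < 0 :=
        lt_of_le_of_ne (by linarith) (fun hh => (hne (by linarith)).elim)
      have hwc : ContinuousOn (fun s => uβ s - uα s) (Icc 0 r) :=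
        (huβC2.continuousOn.sub huαC2.continuousOn).mono
          (Icc_subset_Ici_self)
      have hmem : (0:ℝ) ∈ Icc (uβ r - uα r) (uβ 0 - uα 0) := by
        constructor
        · linarith
        · rw [huα0, huβ0]; linarith
      obtain ⟨s, hs, hws⟩ := intermediate_value_Icc' h.le hwc hmem
      simp only [] at hws
      have hs0 : 0 < s := by
        rcases eq_or_lt_of_le hs.1 with h0 | h0
        · exfalso
          rw [← h0, huα0, huβ0] at hws
          linarith
        · exact h0
      exact hcon s hs0 (by linarith)
  exact stable_of_pos N hN ψ uα uβ hψC2 hψpos hψ0 huαC2 huβC2 hodeα hodeβ hwpos χ hχ hχs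
end

section
/- Let α₁ > α₂ ≥ α₃ > α₄ be real numbers and let u_{α₁}, u_{α₂}, u_{α₃}, u_{α₄} be the corresponding solutions of the initial value problem. If u_{α₃} and u_{α₄} intersect at some point r̄ > 0 (i.e. u_{α₃}(r̄) = u_{α₄}(r̄)), then u_{α₁} and u_{α₂} intersect at some point r with 0 < r ≤ r̄; that is, the first intersection between u_{α₁} and u_{α₂} cannot take place after the first intersection between u_{α₃} and u_{α₄}. -/
/-!
Write `F_u = ψ^{N-1} u'` for the flux of a solution, so that `F_u' = -ψ^{N-1} e^u` and `F_u(0) = 0`.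
If `b < a` and `d < c` on `(0, T)` with `c ≤ a` and `d ≤ b`, convexity of `exp` gives
`(a - b)(e^c - e^d) ≤ (c - d)(e^a - e^b)`, so the weighted Wronskian
`W = (F_a - F_b)(c - d) - (a - b)(F_c - F_d)` decreases from `W(0) = 0`. If `c(T) = d(T)`, then
`W(T) ≥ 0`, hence `W ≡ 0` on `[0, T]` and `(c - d)/(a - b)` is constant; but it is positive
before `T` and zero at `T`.

Suppose `u₁ > u₂` on `(0, r̄]` and let `T` be the first intersection of `u₃` and `u₄`. If
`u₃ ≤ u₂` up to `T` (for `α₂ = α₃` this is uniqueness for the singular initial value problem, by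
Grönwall), the comparison applies to `(u₁, u₂, u₃, u₄)`; otherwise it applies to
`(u₁, u₂, u₂, u₃)` at the first intersection of `u₂` and `u₃`.
-/

open Set Real Filter MeasureTheory Topology

theorem abs_exp_sub_exp_le {x y M : ℝ} (hx : x ≤ M) (hy : y ≤ M) :
    |exp x - exp y| ≤ exp M * |x - y| := by
  simpa [Real.norm_eq_abs] using (convex_Iic M).norm_image_sub_le_of_norm_deriv_le
    (fun _ _ => differentiableAt_exp)
    (fun z hz => by simpa [abs_of_pos (exp_pos z)] using exp_le_exp.2 hz) hy hx

theorem sub_mul_exp_sub_exp_le {a b c d : ℝ} (hba : b < a) (hdc : d < c) (hca : c ≤ a)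
    (hdb : d ≤ b) : (a - b) * (exp c - exp d) ≤ (c - d) * (exp a - exp b) := by
  have h : (exp c - exp d) / (c - d) ≤ (exp a - exp b) / (a - b) :=
    calc (exp c - exp d) / (c - d) ≤ (exp a - exp d) / (a - d) :=
          convexOn_exp.secant_mono (mem_univ d) (mem_univ c) (mem_univ a) hdc.ne'
            (hdc.trans_le hca).ne' hca
      _ = (exp d - exp a) / (d - a) := by rw [← neg_sub (exp a), ← neg_sub a d, neg_div_neg_eq]
      _ ≤ (exp b - exp a) / (b - a) :=
          convexOn_exp.secant_mono (mem_univ a) (mem_univ d) (mem_univ b)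
            (hdc.trans_le hca).ne hba.ne hdb
      _ = (exp a - exp b) / (a - b) := by rw [← neg_sub (exp a), ← neg_sub a b, neg_div_neg_eq]
  rw [div_le_div_iff₀ (sub_pos.2 hdc) (sub_pos.2 hba)] at h
  linarith

theorem IsPreconnected.forall_lt_of_forall_ne {X α : Type*} [TopologicalSpace X] [LinearOrder α]
    [TopologicalSpace α] [OrderClosedTopology α] {s : Set X} {f g : X → α} {a : X}
    (hs : IsPreconnected s) (hf : ContinuousOn f s) (hg : ContinuousOn g s) (ha : a ∈ s)
    (hlt : g a < f a) (hne : ∀ x ∈ s, f x ≠ g x) : ∀ x ∈ s, g x < f x := by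
  intro x hx
  by_contra! hle
  obtain ⟨y, hy, hfg⟩ := hs.intermediate_value₂ hx ha hf hg hle hlt.le
  exact hne y hy hfg

theorem exists_first_eq {f g : ℝ → ℝ} {a b : ℝ} (hf : ContinuousOn f (Icc a b))
    (hg : ContinuousOn g (Icc a b)) (hlt : g a < f a) (heq : ∃ x ∈ Icc a b, f x = g x) :
    ∃ T ∈ Ioc a b, f T = g T ∧ ∀ x ∈ Ico a T, g x < f x := by
  set E := {x ∈ Icc a b | f x = g x}
  have hbdd : BddBelow E := ⟨a, fun x hx => hx.1.1⟩
  obtain ⟨⟨haT, hTb⟩, hT⟩ : sInf E ∈ E := isClosed_Icc.isClosed_eq hf hg |>.csInf_mem heq hbdd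
  have hfirst : ∀ x ∈ Ico a (sInf E), g x < f x := fun x hx =>
    isPreconnected_Icc.forall_lt_of_forall_ne (hf.mono (Icc_subset_Icc le_rfl (hx.2.le.trans hTb)))
      (hg.mono (Icc_subset_Icc le_rfl (hx.2.le.trans hTb))) (left_mem_Icc.2 hx.1) hlt
      (fun y hy hfg => (csInf_le hbdd ⟨⟨hy.1, hy.2.trans (hx.2.le.trans hTb)⟩, hfg⟩).not_gt
        (hy.2.trans_lt hx.2)) x (right_mem_Icc.2 hx.1)
  refine ⟨sInf E, ⟨haT.lt_of_ne fun h => ?_, hTb⟩, hT, hfirst⟩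
  rw [← h] at hT
  exact hlt.ne' hT

theorem HasDerivAt.nonpos_of_eq_zero_of_pos_left {f : ℝ → ℝ} {f' T : ℝ} (hf : HasDerivAt f f' T)
    (hT : f T = 0) (hpos : ∀ᶠ x in 𝓝[<] T, 0 < f x) : f' ≤ 0 := by
  refine le_of_tendsto ((hasDerivAt_iff_tendsto_slope.mp hf).mono_left
    (nhdsWithin_mono T (s := Iio T) fun x hx => ne_of_lt hx)) ?_
  filter_upwards [hpos, self_mem_nhdsWithin] with x hx hxT
  rw [slope_def_field, hT, sub_zero]
  exact div_nonpos_of_nonneg_of_nonpos hx.le (sub_nonpos.2 (le_of_lt hxT))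

theorem div_eq_div_of_deriv_mul_sub_mul_deriv_eq_zero {f g f' g' : ℝ → ℝ} {s t : ℝ} (hst : s ≤ t)
    (hf : ∀ x ∈ Icc s t, HasDerivAt f (f' x) x) (hg : ∀ x ∈ Icc s t, HasDerivAt g (g' x) x)
    (hg0 : ∀ x ∈ Icc s t, g x ≠ 0) (hW : ∀ x ∈ Icc s t, f' x * g x - f x * g' x = 0) :
    f t / g t = f s / g s := by
  have hQ : ∀ x ∈ Icc s t, HasDerivAt (fun y => f y / g y) 0 x := fun x hx => by
    simpa [hW x hx] using (hf x hx).fun_div (hg x hx) (hg0 x hx)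
  exact constant_of_has_deriv_right_zero
    (fun x hx => (hQ x hx).continuousAt.continuousWithinAt)
    (fun x hx => (hQ x (Ico_subset_Icc_self hx)).hasDerivWithinAt) t (right_mem_Icc.2 hst)

section Regularity

variable {f : ℝ → ℝ} {r : ℝ}

theorem ContDiffOn.hasDerivAt_of_pos {n : WithTop ℕ∞} (hf : ContDiffOn ℝ n f (Ici 0))
    (hn : n ≠ 0) (hr : 0 < r) : HasDerivAt f (derivWithin f (Ici 0) r) r := by
  rw [derivWithin_of_mem_nhds (Ici_mem_nhds hr)]
  exact ((hf.contDiffAt (Ici_mem_nhds hr)).differentiableAt hn).hasDerivAt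

theorem ContDiffOn.hasDerivAt_derivWithin_Ici_of_pos (hf : ContDiffOn ℝ 2 f (Ici 0)) (hr : 0 < r) :
    HasDerivAt (derivWithin f (Ici 0)) (deriv (deriv f) r) r := by
  have hf' : ContDiffOn ℝ 1 (deriv f) (Ioi 0) :=
    (hf.mono Ioi_subset_Ici_self).deriv_of_isOpen isOpen_Ioi (by norm_num)
  refine ((hf'.differentiableOn one_ne_zero r hr).differentiableAt
    (Ioi_mem_nhds hr)).hasDerivAt.congr_of_eventuallyEq ?_
  filter_upwards [Ioi_mem_nhds hr] with s hs using derivWithin_of_mem_nhds (Ici_mem_nhds hs)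

end Regularity

structure IsWarpingFunction (ψ : ℝ → ℝ) : Prop where
  contDiffOn : ContDiffOn ℝ 1 ψ (Ici 0)
  apply_zero : ψ 0 = 0
  pos : ∀ r > (0 : ℝ), 0 < ψ r

structure IsRadialSolution (N : ℕ) (ψ u : ℝ → ℝ) : Prop where
  contDiffOn : ContDiffOn ℝ 2 u (Ici 0)
  ode : ∀ r > (0 : ℝ), deriv (deriv u) r + ((N : ℝ) - 1) * (deriv ψ r / ψ r) * deriv u r
      + Real.exp (u r) = 0

-- `derivWithin` on `Ici 0` rather than `deriv`, so that the flux is continuous up to `r = 0`.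
noncomputable def flux (N : ℕ) (ψ u : ℝ → ℝ) (r : ℝ) : ℝ := ψ r ^ (N - 1) * derivWithin u (Ici 0) r

section Flux

variable {N : ℕ} {ψ u : ℝ → ℝ} {r : ℝ}

theorem flux_apply_zero (hψ : IsWarpingFunction ψ) (hN : 2 ≤ N) : flux N ψ u 0 = 0 := by
  simp [flux, hψ.apply_zero, zero_pow (by omega : N - 1 ≠ 0)]

theorem continuousOn_flux (hψ : IsWarpingFunction ψ) (hu : ContDiffOn ℝ 2 u (Ici 0)) :
    ContinuousOn (flux N ψ u) (Ici 0) :=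
  (hψ.contDiffOn.continuousOn.pow _).mul
    (hu.continuousOn_derivWithin (uniqueDiffOn_Ici 0) one_le_two)

theorem IsRadialSolution.hasDerivAt_flux (hu : IsRadialSolution N ψ u) (hψ : IsWarpingFunction ψ)
    (hN : 1 ≤ N) (hr : 0 < r) : HasDerivAt (flux N ψ u) (-(ψ r ^ (N - 1) * exp (u r))) r := by
  have hψr : HasDerivAt ψ (deriv ψ r) r :=
    ((hψ.contDiffOn.contDiffAt (Ici_mem_nhds hr)).differentiableAt one_ne_zero).hasDerivAt
  refine ((hψr.pow (N - 1)).mul (hu.contDiffOn.hasDerivAt_derivWithin_Ici_of_pos hr)).congr_deriv ?_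
  have hode := hu.ode r hr
  rw [derivWithin_of_mem_nhds (Ici_mem_nhds hr)]
  obtain ⟨m, rfl⟩ : ∃ m, N = m + 1 := ⟨N - 1, by omega⟩
  rcases m with _ | m
  · norm_num at hode ⊢
    linarith
  · have hψ0 : ψ r ≠ 0 := (hψ.pos r hr).ne'
    simp only [Nat.add_sub_cancel, Nat.cast_add, Nat.cast_one, add_sub_cancel_right,
      Pi.pow_apply] at hode ⊢
    rw [show deriv (deriv u) r = -((m + 1 : ℝ) * (deriv ψ r / ψ r) * deriv u r) - exp (u r) by
      linarith, pow_succ (ψ r)]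
    field_simp
    ring

end Flux

noncomputable def fluxWronskian (N : ℕ) (ψ a b c d : ℝ → ℝ) (r : ℝ) : ℝ :=
  (flux N ψ a r - flux N ψ b r) * (c r - d r) - (a r - b r) * (flux N ψ c r - flux N ψ d r)

section Wronskian

variable {N : ℕ} {ψ a b c d : ℝ → ℝ} {T : ℝ}

theorem fluxWronskian_eq_mul (r : ℝ) : fluxWronskian N ψ a b c d r = ψ r ^ (N - 1) *
    ((derivWithin a (Ici 0) r - derivWithin b (Ici 0) r) * (c r - d r)
      - (a r - b r) * (derivWithin c (Ici 0) r - derivWithin d (Ici 0) r)) := by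
  simp only [fluxWronskian, flux]
  ring

theorem hasDerivAt_fluxWronskian (ha : IsRadialSolution N ψ a) (hb : IsRadialSolution N ψ b)
    (hc : IsRadialSolution N ψ c) (hd : IsRadialSolution N ψ d) (hψ : IsWarpingFunction ψ)
    (hN : 1 ≤ N) {r : ℝ} (hr : 0 < r) :
    HasDerivAt (fluxWronskian N ψ a b c d) (ψ r ^ (N - 1) *
      ((a r - b r) * (exp (c r) - exp (d r)) - (c r - d r) * (exp (a r) - exp (b r)))) r := by
  have hder {u : ℝ → ℝ} (hu : IsRadialSolution N ψ u) :=
    hu.contDiffOn.hasDerivAt_of_pos two_ne_zero hr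
  refine ((((ha.hasDerivAt_flux hψ hN hr).fun_sub (hb.hasDerivAt_flux hψ hN hr)).fun_mul
    ((hder hc).fun_sub (hder hd))).fun_sub (((hder ha).fun_sub (hder hb)).fun_mul
      ((hc.hasDerivAt_flux hψ hN hr).fun_sub (hd.hasDerivAt_flux hψ hN hr)))).congr_deriv ?_
  simp only [flux]
  ring

theorem antitoneOn_fluxWronskian (ha : IsRadialSolution N ψ a) (hb : IsRadialSolution N ψ b)
    (hc : IsRadialSolution N ψ c) (hd : IsRadialSolution N ψ d) (hψ : IsWarpingFunction ψ)
    (hN : 1 ≤ N) (hba : ∀ r ∈ Ioo 0 T, b r < a r) (hdc : ∀ r ∈ Ioo 0 T, d r < c r)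
    (hca : ∀ r ∈ Ioo 0 T, c r ≤ a r) (hdb : ∀ r ∈ Ioo 0 T, d r ≤ b r) :
    AntitoneOn (fluxWronskian N ψ a b c d) (Icc 0 T) := by
  have hcont {u : ℝ → ℝ} (hu : IsRadialSolution N ψ u) : ContinuousOn u (Icc 0 T) :=
    hu.contDiffOn.continuousOn.mono Icc_subset_Ici_self
  have hflux {u : ℝ → ℝ} (hu : IsRadialSolution N ψ u) : ContinuousOn (flux N ψ u) (Icc 0 T) :=
    (continuousOn_flux hψ hu.contDiffOn).mono Icc_subset_Ici_self
  refine antitoneOn_of_deriv_nonpos (convex_Icc 0 T)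
    ((((hflux ha).sub (hflux hb)).mul ((hcont hc).sub (hcont hd))).sub
      (((hcont ha).sub (hcont hb)).mul ((hflux hc).sub (hflux hd)))) ?_ ?_ <;>
    rw [interior_Icc] <;> intro r hr
  · exact (hasDerivAt_fluxWronskian ha hb hc hd hψ hN hr.1).differentiableAt.differentiableWithinAt
  · rw [(hasDerivAt_fluxWronskian ha hb hc hd hψ hN hr.1).deriv]
    exact mul_nonpos_of_nonneg_of_nonpos (pow_nonneg (hψ.pos r hr.1).le _) (sub_nonpos.2
      (sub_mul_exp_sub_exp_le (hba r hr) (hdc r hr) (hca r hr) (hdb r hr)))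

theorem IsRadialSolution.apply_ne_of_squeezed (ha : IsRadialSolution N ψ a)
    (hb : IsRadialSolution N ψ b) (hc : IsRadialSolution N ψ c) (hd : IsRadialSolution N ψ d)
    (hψ : IsWarpingFunction ψ) (hN : 2 ≤ N) (hT : 0 < T) (hba : ∀ r ∈ Ioc 0 T, b r < a r)
    (hdc : ∀ r ∈ Ioo 0 T, d r < c r) (hca : ∀ r ∈ Ioo 0 T, c r ≤ a r)
    (hdb : ∀ r ∈ Ioo 0 T, d r ≤ b r) : c T ≠ d T := by
  intro hcdT
  set W := fluxWronskian N ψ a b c d with hWdef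
  have hanti := antitoneOn_fluxWronskian ha hb hc hd hψ (by omega)
    (fun r hr => hba r (Ioo_subset_Ioc_self hr)) hdc hca hdb
  have hW0 : W 0 = 0 := by simp [W, fluxWronskian, flux_apply_zero hψ hN]
  have hder {u : ℝ → ℝ} (hu : IsRadialSolution N ψ u) {r : ℝ} (hr : 0 < r) :=
    hu.contDiffOn.hasDerivAt_of_pos two_ne_zero hr
  have hcd' : derivWithin c (Ici 0) T - derivWithin d (Ici 0) T ≤ 0 :=
    ((hder hc hT).sub (hder hd hT)).nonpos_of_eq_zero_of_pos_left (sub_eq_zero.2 hcdT) <| by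
      filter_upwards [Ioo_mem_nhdsLT hT] with r hr using sub_pos.2 (hdc r hr)
  have hWT : 0 ≤ W T := by
    rw [hWdef, fluxWronskian_eq_mul, hcdT, sub_self, mul_zero, zero_sub]
    exact mul_nonneg (pow_nonneg (hψ.pos T hT).le _) (neg_nonneg.2
      (mul_nonpos_of_nonneg_of_nonpos (sub_pos.2 (hba T ⟨hT, le_rfl⟩)).le hcd'))
  have hW_zero (r : ℝ) (hr : r ∈ Ioc 0 T) : W r = 0 :=
    le_antisymm (hW0 ▸ hanti (left_mem_Icc.2 hT.le) (Ioc_subset_Icc_self hr) hr.1.le)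
      (hWT.trans (hanti (Ioc_subset_Icc_self hr) (right_mem_Icc.2 hT.le) hr.2))
  have hmem {r : ℝ} (hr : r ∈ Icc (T / 2) T) : r ∈ Ioc 0 T := ⟨by linarith [hr.1], hr.2⟩
  have hquot := div_eq_div_of_deriv_mul_sub_mul_deriv_eq_zero (by linarith)
    (fun r hr => (hder hc (hmem hr).1).fun_sub (hder hd (hmem hr).1))
    (fun r hr => (hder ha (hmem hr).1).fun_sub (hder hb (hmem hr).1))
    (fun r hr => (sub_pos.2 (hba r (hmem hr))).ne') fun r hr => by
      have h := hW_zero r (hmem hr)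
      rw [hWdef, fluxWronskian_eq_mul, mul_eq_zero] at h
      linarith [h.resolve_left (pow_pos (hψ.pos r (hmem hr).1) _).ne']
  have hhalf : T / 2 ∈ Ioo 0 T := ⟨by linarith, by linarith⟩
  rw [hcdT, sub_self, zero_div] at hquot
  exact (div_pos (sub_pos.2 (hdc _ hhalf)) (sub_pos.2 (hba _ (Ioo_subset_Ioc_self hhalf)))).ne'
    hquot.symm

end Wronskian

section Uniqueness

variable {N : ℕ} {ψ u v : ℝ → ℝ} {r M : ℝ}

theorem IsRadialSolution.abs_derivWithin_sub_le (hu : IsRadialSolution N ψ u)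
    (hv : IsRadialSolution N ψ v) (hψ : IsWarpingFunction ψ) (hψmono : MonotoneOn ψ (Ici 0))
    (hN : 2 ≤ N) (hr : 0 < r) (huM : ∀ s ∈ Icc 0 r, u s ≤ M) (hvM : ∀ s ∈ Icc 0 r, v s ≤ M) :
    |derivWithin u (Ici 0) r - derivWithin v (Ici 0) r| ≤ exp M * ∫ s in 0..r, |u s - v s| := by
  have hcont {w : ℝ → ℝ} (hw : IsRadialSolution N ψ w) : ContinuousOn w (Icc 0 r) :=
    hw.contDiffOn.continuousOn.mono Icc_subset_Ici_self
  have hψc : ContinuousOn ψ (Icc 0 r) := hψ.contDiffOn.continuousOn.mono Icc_subset_Ici_self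
  have hψnonneg {s : ℝ} (hs : s ∈ Icc 0 r) : 0 ≤ ψ s :=
    hψ.apply_zero ▸ hψmono self_mem_Ici hs.1 hs.1
  have hFTC : ∫ s in 0..r, (-(ψ s ^ (N - 1) * exp (u s)) - -(ψ s ^ (N - 1) * exp (v s))) =
      flux N ψ u r - flux N ψ v r := by
    rw [intervalIntegral.integral_eq_sub_of_hasDerivAt_of_le hr.le
      (((continuousOn_flux hψ hu.contDiffOn).sub (continuousOn_flux hψ hv.contDiffOn)).mono
        Icc_subset_Ici_self)
      (fun s hs =>
        (hu.hasDerivAt_flux hψ (by omega) hs.1).sub (hv.hasDerivAt_flux hψ (by omega) hs.1))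
      (ContinuousOn.intervalIntegrable_of_Icc hr.le (((hψc.pow _).mul (hcont hu).rexp).neg.sub
        ((hψc.pow _).mul (hcont hv).rexp).neg)),
      Pi.sub_apply, Pi.sub_apply, flux_apply_zero hψ hN, flux_apply_zero hψ hN, sub_self, sub_zero]
  have hbound : |flux N ψ u r - flux N ψ v r| ≤
      ψ r ^ (N - 1) * (exp M * ∫ s in 0..r, |u s - v s|) := by
    rw [← hFTC, ← intervalIntegral.integral_const_mul, ← intervalIntegral.integral_const_mul]
    refine (Real.norm_eq_abs _).symm.trans_le
      (intervalIntegral.norm_integral_le_of_norm_le hr.le (ae_of_all _ fun s hs => ?_) ?_)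
    · have hs' : s ∈ Icc 0 r := Ioc_subset_Icc_self hs
      rw [Real.norm_eq_abs, neg_sub_neg, ← mul_sub, abs_mul, abs_sub_comm,
        abs_of_nonneg (pow_nonneg (hψnonneg hs') _)]
      exact mul_le_mul (pow_le_pow_left₀ (hψnonneg hs') (hψmono hs'.1 hr.le hs'.2) _)
        (abs_exp_sub_exp_le (huM s hs') (hvM s hs')) (abs_nonneg _)
        (pow_nonneg (hψnonneg (right_mem_Icc.2 hr.le)) _)
    · exact ContinuousOn.intervalIntegrable_of_Icc hr.le
        (continuousOn_const.mul (continuousOn_const.mul ((hcont hu).sub (hcont hv)).abs))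
  rw [show flux N ψ u r - flux N ψ v r = ψ r ^ (N - 1) *
      (derivWithin u (Ici 0) r - derivWithin v (Ici 0) r) by simp only [flux]; ring,
    abs_mul, abs_of_pos (pow_pos (hψ.pos r hr) _)] at hbound
  exact le_of_mul_le_mul_left hbound (pow_pos (hψ.pos r hr) _)

theorem IsRadialSolution.abs_sub_le (hu : IsRadialSolution N ψ u) (hv : IsRadialSolution N ψ v)
    (hψ : IsWarpingFunction ψ) (hψmono : MonotoneOn ψ (Ici 0)) (hN : 2 ≤ N) (h0 : u 0 = v 0)
    (hr : 0 ≤ r) (huM : ∀ s ∈ Icc 0 r, u s ≤ M) (hvM : ∀ s ∈ Icc 0 r, v s ≤ M) :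
    |u r - v r| ≤ r * (exp M * ∫ s in 0..r, |u s - v s|) := by
  have hder {w : ℝ → ℝ} (hw : IsRadialSolution N ψ w) {s : ℝ} (hs : 0 < s) :=
    hw.contDiffOn.hasDerivAt_of_pos two_ne_zero hs
  have hderc {w : ℝ → ℝ} (hw : IsRadialSolution N ψ w) :
      ContinuousOn (derivWithin w (Ici 0)) (Icc 0 r) :=
    (hw.contDiffOn.continuousOn_derivWithin (uniqueDiffOn_Ici 0) one_le_two).mono
      Icc_subset_Ici_self
  have hFTC : ∫ s in 0..r, (derivWithin u (Ici 0) s - derivWithin v (Ici 0) s) = u r - v r := by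
    rw [intervalIntegral.integral_eq_sub_of_hasDerivAt_of_le hr
      ((hu.contDiffOn.continuousOn.sub hv.contDiffOn.continuousOn).mono Icc_subset_Ici_self)
      (fun s hs => (hder hu hs.1).sub (hder hv hs.1))
      (ContinuousOn.intervalIntegrable_of_Icc hr ((hderc hu).sub (hderc hv))),
      Pi.sub_apply, Pi.sub_apply, h0, sub_self, sub_zero]
  have hmono : ∀ s ∈ Ioc 0 r, ∫ t in 0..s, |u t - v t| ≤ ∫ t in 0..r, |u t - v t| :=
    fun s hs => intervalIntegral.integral_mono_interval le_rfl hs.1.le hs.2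
      (Eventually.of_forall fun _ => abs_nonneg _)
      (ContinuousOn.intervalIntegrable_of_Icc hr ((hu.contDiffOn.continuousOn.sub
        hv.contDiffOn.continuousOn).mono Icc_subset_Ici_self).abs)
  have h := intervalIntegral.norm_integral_le_of_norm_le_const
    (f := fun s => derivWithin u (Ici 0) s - derivWithin v (Ici 0) s)
    (C := exp M * ∫ s in 0..r, |u s - v s|) (a := 0) (b := r) fun s hs => by
      rw [uIoc_of_le hr] at hs
      have hsub : Icc 0 s ⊆ Icc 0 r := Icc_subset_Icc le_rfl hs.2
      exact (hu.abs_derivWithin_sub_le hv hψ hψmono hN hs.1 (fun t ht => huM t (hsub ht))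
        (fun t ht => hvM t (hsub ht))).trans
        (mul_le_mul_of_nonneg_left (hmono s hs) (exp_pos M).le)
  rwa [hFTC, Real.norm_eq_abs, sub_zero, abs_of_nonneg hr, mul_comm] at h

theorem IsRadialSolution.eqOn_of_apply_zero_eq (hu : IsRadialSolution N ψ u)
    (hv : IsRadialSolution N ψ v) (hψ : IsWarpingFunction ψ) (hψmono : MonotoneOn ψ (Ici 0))
    (hN : 2 ≤ N) (h0 : u 0 = v 0) : EqOn u v (Ici 0) := by
  intro r (hr : 0 ≤ r)
  have hz : ContinuousOn (fun s => |u s - v s|) (Ici 0) :=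
    (hu.contDiffOn.continuousOn.sub hv.contDiffOn.continuousOn).abs
  obtain ⟨M, hM⟩ := isCompact_Icc.bddAbove_image ((hu.contDiffOn.continuousOn.sup
    hv.contDiffOn.continuousOn).mono (Icc_subset_Ici_self : Icc 0 r ⊆ Ici 0))
  have hbound (s : ℝ) (hs : s ∈ Icc 0 r) :
      |u s - v s| ≤ r * exp M * ‖∫ t in 0..s, |u t - v t|‖ := by
    have hsub : Icc 0 s ⊆ Icc 0 r := Icc_subset_Icc le_rfl hs.2
    have hint : 0 ≤ ∫ t in 0..s, |u t - v t| :=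
      intervalIntegral.integral_nonneg hs.1 fun _ _ => abs_nonneg _
    rw [Real.norm_of_nonneg hint, mul_assoc]
    exact (hu.abs_sub_le hv hψ hψmono hN h0 hs.1
      (fun t ht => (le_sup_left (a := u t)).trans (hM ⟨t, hsub ht, rfl⟩))
      (fun t ht => (le_sup_right (b := v t)).trans (hM ⟨t, hsub ht, rfl⟩))).trans
      (mul_le_mul_of_nonneg_right hs.2 (mul_nonneg (exp_pos M).le hint))
  have hprim : ∀ s ∈ Icc 0 r, ∫ t in 0..s, |u t - v t| = 0 :=
    eq_zero_of_abs_deriv_le_mul_abs_self_of_eq_zero_right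
      (by
        rw [← uIcc_of_le hr]
        exact intervalIntegral.continuousOn_primitive_interval
          ((hz.mono (uIcc_of_le hr ▸ Icc_subset_Ici_self)).integrableOn_uIcc))
      (fun s hs => intervalIntegral.integral_hasDerivWithinAt_right
        (hz.mono Icc_subset_Ici_self |>.intervalIntegrable_of_Icc hs.1)
        ((hz.mono fun x hx => hs.1.trans hx.le).stronglyMeasurableAtFilter_nhdsWithin
          measurableSet_Ioi s)
        ((hz s hs.1).mono fun x hx => hs.1.trans hx.le))
      (by simp) (fun s hs => by simpa using hbound s (Ico_subset_Icc_self hs))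
  have h := hbound r ⟨hr, le_rfl⟩
  rw [hprim r ⟨hr, le_rfl⟩, norm_zero, mul_zero] at h
  exact sub_eq_zero.1 (abs_nonpos_iff.1 h)

end Uniqueness

theorem statement11_general (N : ℕ) (hN : 2 ≤ N) (ψ : ℝ → ℝ)
    (hψC2 : ContDiffOn ℝ 2 ψ (Ici 0))
    (hψpos : ∀ r > (0:ℝ), ψ r > 0)
    (hψ0 : ψ 0 = 0)
    (hψ'pos : ∀ r > (0:ℝ), deriv ψ r > 0)
    (α₁ α₂ α₃ α₄ : ℝ) (h12 : α₁ > α₂) (h23 : α₂ ≥ α₃) (h34 : α₃ > α₄)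
    (u₁ u₂ u₃ u₄ : ℝ → ℝ)
    (hu₁C2 : ContDiffOn ℝ 2 u₁ (Ici 0)) (hu₁0 : u₁ 0 = α₁)
    (hode₁ : ∀ r > (0:ℝ), deriv (deriv u₁) r + ((N : ℝ) - 1) * (deriv ψ r / ψ r) * deriv u₁ r
      + Real.exp (u₁ r) = 0)
    (hu₂C2 : ContDiffOn ℝ 2 u₂ (Ici 0)) (hu₂0 : u₂ 0 = α₂)
    (hode₂ : ∀ r > (0:ℝ), deriv (deriv u₂) r + ((N : ℝ) - 1) * (deriv ψ r / ψ r) * deriv u₂ r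
      + Real.exp (u₂ r) = 0)
    (hu₃C2 : ContDiffOn ℝ 2 u₃ (Ici 0)) (hu₃0 : u₃ 0 = α₃)
    (hode₃ : ∀ r > (0:ℝ), deriv (deriv u₃) r + ((N : ℝ) - 1) * (deriv ψ r / ψ r) * deriv u₃ r
      + Real.exp (u₃ r) = 0)
    (hu₄C2 : ContDiffOn ℝ 2 u₄ (Ici 0)) (hu₄0 : u₄ 0 = α₄)
    (hode₄ : ∀ r > (0:ℝ), deriv (deriv u₄) r + ((N : ℝ) - 1) * (deriv ψ r / ψ r) * deriv u₄ r
      + Real.exp (u₄ r) = 0)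
    (rbar : ℝ) (hrbar : 0 < rbar) (hint34 : u₃ rbar = u₄ rbar)
    : ∃ r : ℝ, 0 < r ∧ r ≤ rbar ∧ u₁ r = u₂ r := by
  by_contra! hne
  have hψ : IsWarpingFunction ψ := ⟨hψC2.of_le one_le_two, hψ0, hψpos⟩
  have hψmono : MonotoneOn ψ (Ici 0) := (strictMonoOn_of_deriv_pos (convex_Ici 0)
    hψC2.continuousOn fun r hr => hψ'pos r (by simpa using hr)).monotoneOn
  have S₁ : IsRadialSolution N ψ u₁ := ⟨hu₁C2, hode₁⟩
  have S₂ : IsRadialSolution N ψ u₂ := ⟨hu₂C2, hode₂⟩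
  have S₃ : IsRadialSolution N ψ u₃ := ⟨hu₃C2, hode₃⟩
  have S₄ : IsRadialSolution N ψ u₄ := ⟨hu₄C2, hode₄⟩
  have hcont {u : ℝ → ℝ} (hu : IsRadialSolution N ψ u) (R : ℝ) : ContinuousOn u (Icc 0 R) :=
    hu.contDiffOn.continuousOn.mono Icc_subset_Ici_self
  have h21 : ∀ r ∈ Icc 0 rbar, u₂ r < u₁ r :=
    isPreconnected_Icc.forall_lt_of_forall_ne (hcont S₁ _) (hcont S₂ _)
      (left_mem_Icc.2 hrbar.le) (by linarith) fun r ⟨hr0, hr⟩ => by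
        rcases hr0.eq_or_lt with rfl | hr0
        · linarith
        · exact hne r hr0 hr
  obtain ⟨T, ⟨hT0, hTr⟩, hT34, h43⟩ := exists_first_eq (hcont S₃ _) (hcont S₄ _) (by linarith)
    ⟨rbar, right_mem_Icc.2 hrbar.le, hint34⟩
  have h43T : ∀ r ∈ Ioo 0 T, u₄ r < u₃ r := fun r hr => h43 r ⟨hr.1.le, hr.2⟩
  have hsqueeze {c d : ℝ → ℝ} (hc : IsRadialSolution N ψ c) (hd : IsRadialSolution N ψ d)
      {S : ℝ} (hS : S ∈ Ioc 0 T) (hdc : ∀ r ∈ Ioo 0 S, d r < c r)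
      (hc₂ : ∀ r ∈ Ioo 0 S, c r ≤ u₂ r) : c S ≠ d S :=
    S₁.apply_ne_of_squeezed S₂ hc hd hψ hN hS.1
      (fun r hr => h21 r ⟨hr.1.le, hr.2.trans (hS.2.trans hTr)⟩) hdc
      (fun r hr => (hc₂ r hr).trans (h21 r ⟨hr.1.le, hr.2.le.trans (hS.2.trans hTr)⟩).le)
      (fun r hr => ((hdc r hr).trans_le (hc₂ r hr)).le)
  rcases h23.eq_or_lt with h23 | h23
  · have h32 : EqOn u₃ u₂ (Ici 0) :=
      S₃.eqOn_of_apply_zero_eq S₂ hψ hψmono hN (by rw [hu₂0, hu₃0, h23])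
    exact hsqueeze S₃ S₄ ⟨hT0, le_rfl⟩ h43T (fun r hr => (h32 hr.1.le).le) hT34
  · by_cases hmeet : ∃ s ∈ Icc 0 T, u₂ s = u₃ s
    · obtain ⟨S, hS, hS23, h32⟩ := exists_first_eq (hcont S₂ _) (hcont S₃ _) (by linarith) hmeet
      exact hsqueeze S₂ S₃ hS (fun r hr => h32 r ⟨hr.1.le, hr.2⟩) (fun _ _ => le_rfl) hS23
    · have h32 := isPreconnected_Icc.forall_lt_of_forall_ne (hcont S₂ T) (hcont S₃ T)
        (left_mem_Icc.2 hT0.le) (by linarith) (by simpa using hmeet)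
      exact hsqueeze S₃ S₄ ⟨hT0, le_rfl⟩ h43T (fun r hr => (h32 r ⟨hr.1.le, hr.2.le⟩).le) hT34

theorem statement11 (N : ℕ) (hN : 2 ≤ N) (ψ : ℝ → ℝ)
    (hψC2 : ContDiffOn ℝ 2 ψ (Ici 0))
    (hψpos : ∀ r > (0:ℝ), ψ r > 0)
    (hψ0 : ψ 0 = 0) (hψ''0 : deriv (deriv ψ) 0 = 0) (hψ'0 : deriv ψ 0 = 1)
    (hψ'pos : ∀ r > (0:ℝ), deriv ψ r > 0)
    (Λ : EReal) (hΛpos : 0 < Λ)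
    (hA3 : Filter.Tendsto (fun r => ((deriv ψ r / ψ r : ℝ) : EReal)) Filter.atTop (nhds Λ))
    (α₁ α₂ α₃ α₄ : ℝ) (h12 : α₁ > α₂) (h23 : α₂ ≥ α₃) (h34 : α₃ > α₄)
    (u₁ u₂ u₃ u₄ : ℝ → ℝ)
    (hu₁C2 : ContDiffOn ℝ 2 u₁ (Ici 0)) (hu₁0 : u₁ 0 = α₁) (hu₁'0 : deriv u₁ 0 = 0)
    (hode₁ : ∀ r > (0:ℝ), deriv (deriv u₁) r + ((N : ℝ) - 1) * (deriv ψ r / ψ r) * deriv u₁ r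
      + Real.exp (u₁ r) = 0)
    (hu₂C2 : ContDiffOn ℝ 2 u₂ (Ici 0)) (hu₂0 : u₂ 0 = α₂) (hu₂'0 : deriv u₂ 0 = 0)
    (hode₂ : ∀ r > (0:ℝ), deriv (deriv u₂) r + ((N : ℝ) - 1) * (deriv ψ r / ψ r) * deriv u₂ r
      + Real.exp (u₂ r) = 0)
    (hu₃C2 : ContDiffOn ℝ 2 u₃ (Ici 0)) (hu₃0 : u₃ 0 = α₃) (hu₃'0 : deriv u₃ 0 = 0)
    (hode₃ : ∀ r > (0:ℝ), deriv (deriv u₃) r + ((N : ℝ) - 1) * (deriv ψ r / ψ r) * deriv u₃ r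
      + Real.exp (u₃ r) = 0)
    (hu₄C2 : ContDiffOn ℝ 2 u₄ (Ici 0)) (hu₄0 : u₄ 0 = α₄) (hu₄'0 : deriv u₄ 0 = 0)
    (hode₄ : ∀ r > (0:ℝ), deriv (deriv u₄) r + ((N : ℝ) - 1) * (deriv ψ r / ψ r) * deriv u₄ r
      + Real.exp (u₄ r) = 0)
    (rbar : ℝ) (hrbar : 0 < rbar) (hint34 : u₃ rbar = u₄ rbar)
    : ∃ r : ℝ, 0 < r ∧ r ≤ rbar ∧ u₁ r = u₂ r :=
  statement11_general N hN ψ hψC2 hψpos hψ0 hψ'pos α₁ α₂ α₃ α₄ h12 h23 h34 u₁ u₂ u₃ u₄ hu₁C2 hu₁0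
    hode₁ hu₂C2 hu₂0 hode₂ hu₃C2 hu₃0 hode₃ hu₄C2 hu₄0 hode₄ rbar hrbar hint34
end

section
/- Suppose the set S = {α ∈ ℝ : u_α is stable} is nonempty and bounded above, and let η = sup S. Then η ∈ S, i.e. the solution u_η is stable. -/
open Set Real Filter MeasureTheory
open intervalIntegral Topology

lemma exp_lip {a b M : ℝ} (ha : a ≤ M) (hb : b ≤ M) :
    |Real.exp a - Real.exp b| ≤ Real.exp M * |a - b| := by
  wlog h : b ≤ a generalizing a b
  · rw [abs_sub_comm, abs_sub_comm a b]; exact this hb ha (le_of_not_ge h)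
  rw [abs_of_nonneg (sub_nonneg.2 (Real.exp_le_exp.2 h)), abs_of_nonneg (sub_nonneg.2 h)]
  have h1 : 1 + (b - a) ≤ Real.exp (b - a) := by
    have := Real.add_one_le_exp (b - a); linarith
  have h2 : Real.exp a - Real.exp b ≤ Real.exp a * (a - b) := by
    have h3 : Real.exp a * Real.exp (b - a) = Real.exp b := by
      rw [← Real.exp_add]; ring_nf
    nlinarith [Real.exp_pos a]
  calc Real.exp a - Real.exp b ≤ Real.exp a * (a - b) := h2
    _ ≤ Real.exp M * (a - b) := by
        have := Real.exp_le_exp.2 ha; nlinarith [sub_nonneg.2 h]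

lemma primitive_hasDerivWithinAt {g : ℝ → ℝ} (hg : ContinuousOn g (Ici 0)) {r : ℝ} (hr : 0 ≤ r) :
    HasDerivWithinAt (fun x => ∫ t in (0:ℝ)..x, g t) (g r) (Ici r) r := by
  rcases eq_or_lt_of_le hr with h0 | h0
  · subst h0
    exact intervalIntegral.integral_hasDerivWithinAt_right (s := Ici 0) (t := Ioi 0)
      (by simp)
      ((hg.mono (Ioi_subset_Ici le_rfl)).stronglyMeasurableAtFilter_nhdsWithin measurableSet_Ioi 0)
      ((hg.continuousWithinAt self_mem_Ici).mono (Ioi_subset_Ici le_rfl))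
  · refine (intervalIntegral.integral_hasDerivAt_right
      ((hg.mono (by rw [uIcc_of_le hr]; exact Icc_subset_Ici_self)).intervalIntegrable)
      ((hg.mono (Ioi_subset_Ici le_rfl)).stronglyMeasurableAtFilter isOpen_Ioi r h0)
      ((hg.continuousAt (Ici_mem_nhds h0)))).hasDerivWithinAt

section Key
variable {N : ℕ} (hN : 2 ≤ N) {ψ u : ℝ → ℝ}
  (hψC2 : ContDiffOn ℝ 2 ψ (Ici 0))
  (hψpos : ∀ r > (0:ℝ), ψ r > 0) (hψ0 : ψ 0 = 0)
  (hu : ContDiffOn ℝ 2 u (Ici 0))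
  (hode : ∀ r > (0:ℝ), deriv (deriv u) r + ((N : ℝ) - 1) * (deriv ψ r / ψ r) * deriv u r
        + Real.exp (u r) = 0)

include hN hψC2 hψpos hψ0 hu hode in
lemma key_identity : ∀ r > (0:ℝ),
    ψ r ^ (N-1) * deriv u r = -∫ t in (0:ℝ)..r, Real.exp (u t) * ψ t ^ (N-1) := by
  intro r hr
  set g : ℝ → ℝ := fun t => Real.exp (u t) * ψ t ^ (N-1) with hg
  have hψcont : ContinuousOn ψ (Ici 0) := hψC2.continuousOn
  have hucont : ContinuousOn u (Ici 0) := hu.continuousOn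
  have hgcont : ContinuousOn g (Ici 0) :=
    ((Real.continuous_exp.comp_continuousOn hucont).mul (hψcont.pow _))
  set u₁ : ℝ → ℝ := derivWithin u (Ici 0) with hu₁
  have hu₁cont : ContinuousOn u₁ (Ici 0) :=
    hu.continuousOn_derivWithin (uniqueDiffOn_Ici 0) (by norm_num)
  have hueq : ∀ x > (0:ℝ), u₁ x = deriv u x := fun x hx =>
    derivWithin_of_mem_nhds (Ici_mem_nhds hx)
  set F : ℝ → ℝ := fun x => ψ x ^ (N-1) * u₁ x + ∫ t in (0:ℝ)..x, g t with hF
  have hFd : ∀ x > (0:ℝ), HasDerivAt F 0 x := by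
    intro x hx
    have hψx : HasDerivAt ψ (deriv ψ x) x :=
      ((hψC2.contDiffAt (Ici_mem_nhds hx)).differentiableAt (by norm_num)).hasDerivAt
    have hψpow : HasDerivAt (fun y => ψ y ^ (N-1))
        ((N-1 : ℕ) * ψ x ^ (N-1-1) * deriv ψ x) x := hψx.pow _
    have hd1 : HasDerivAt (deriv u) (deriv (deriv u) x) x := by
      have h2 : ContDiffOn ℝ 1 (deriv u) (Ioi 0) :=
        (hu.mono Ioi_subset_Ici_self).deriv_of_isOpen isOpen_Ioi (by norm_num)
      exact ((h2.differentiableOn (by norm_num)).differentiableAt (Ioi_mem_nhds hx)).hasDerivAt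
    have hux : HasDerivAt u (deriv u x) x :=
      ((hu.contDiffAt (Ici_mem_nhds hx)).differentiableAt (by norm_num)).hasDerivAt
    have hprod : HasDerivAt (fun y => ψ y ^ (N-1) * deriv u y)
        ((N-1 : ℕ) * ψ x ^ (N-1-1) * deriv ψ x * deriv u x
          + ψ x ^ (N-1) * deriv (deriv u) x) x := hψpow.mul hd1
    have hprod' : HasDerivAt (fun y => ψ y ^ (N-1) * u₁ y)
        ((N-1 : ℕ) * ψ x ^ (N-1-1) * deriv ψ x * deriv u x
          + ψ x ^ (N-1) * deriv (deriv u) x) x := by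
      refine hprod.congr_of_eventuallyEq ?_
      filter_upwards [Ioi_mem_nhds hx] with y hy
      rw [hueq y hy]
    have hint : HasDerivAt (fun y => ∫ t in (0:ℝ)..y, g t) (g x) x :=
      intervalIntegral.integral_hasDerivAt_right
        ((hgcont.mono (by rw [uIcc_of_le hx.le]; exact Icc_subset_Ici_self)).intervalIntegrable)
        ((hgcont.mono (Ioi_subset_Ici le_rfl)).stronglyMeasurableAtFilter isOpen_Ioi x hx)
        (hgcont.continuousAt (Ici_mem_nhds hx))
    have := hprod'.add hint
    replace this : HasDerivAt F _ x := this
    convert this using 1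
    have hψne : ψ x ≠ 0 := (hψpos x hx).ne'
    have hodex := hode x hx
    have hcast : ((N - 1 : ℕ) : ℝ) = (N : ℝ) - 1 := by
      have : (1:ℕ) ≤ N := by omega
      push_cast [Nat.cast_sub this]; ring
    have hpow : ψ x ^ (N-1) = ψ x ^ (N-2) * ψ x := by
      rw [← pow_succ]; congr 1; omega
    have hpow2 : N - 1 - 1 = N - 2 := by omega
    have hdd : deriv (deriv u) x = -(((N : ℝ) - 1) * (deriv ψ x / ψ x) * deriv u x)
        - Real.exp (u x) := by linarith
    rw [hg, hcast, hpow2, hdd, hpow]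
    field_simp
    rw [hpow]; ring
  -- constancy and limit
  have hgInt : IntegrableOn g (uIcc 0 r) := by
    rw [uIcc_of_le hr.le]
    exact (hgcont.mono Icc_subset_Ici_self).integrableOn_compact isCompact_Icc
  have hFcont : ContinuousOn F (Icc 0 r) := by
    apply ContinuousOn.add
    · exact ((hψcont.pow _).mul hu₁cont).mono Icc_subset_Ici_self
    · simpa [uIcc_of_le hr.le] using intervalIntegral.continuousOn_primitive_interval hgInt
  have hconst : ∀ ε ∈ Ioc (0:ℝ) r, F r = F ε := by
    intro ε hε
    have := constant_of_has_deriv_right_zero (f := F) (a := ε) (b := r)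
      (hcont := hFcont.mono (Icc_subset_Icc hε.1.le le_rfl))
      (hderiv := fun x hx => (hFd x (lt_of_lt_of_le hε.1 hx.1)).hasDerivWithinAt)
    exact this r (right_mem_Icc.2 hε.2)
  have hne : (𝓝[Ioo (0:ℝ) r] 0).NeBot := by
    rw [← mem_closure_iff_nhdsWithin_neBot, closure_Ioo hr.ne]
    exact left_mem_Icc.2 hr.le
  have hF0 : F 0 = 0 := by
    simp [hF, hψ0, zero_pow (show N - 1 ≠ 0 by omega)]
  have h1 : Tendsto F (𝓝[Ioo (0:ℝ) r] 0) (𝓝 (F 0)) :=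
    (hFcont.continuousWithinAt (left_mem_Icc.2 hr.le)).mono Ioo_subset_Icc_self
  have h2 : Tendsto F (𝓝[Ioo (0:ℝ) r] 0) (𝓝 (F r)) := by
    refine Tendsto.congr' ?_ tendsto_const_nhds
    filter_upwards [self_mem_nhdsWithin] with ε hε
    exact hconst ε ⟨hε.1, hε.2.le⟩
  have hFr : F r = 0 := by rw [tendsto_nhds_unique h2 h1, hF0]
  have hur : u₁ r = deriv u r := hueq r hr
  have : ψ r ^ (N-1) * u₁ r + ∫ t in (0:ℝ)..r, g t = 0 := hFr
  rw [hur] at this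
  linarith
end Key

lemma II0 {f : ℝ → ℝ} (hf : ContinuousOn f (Ici 0)) {r : ℝ} (hr : 0 ≤ r) :
    IntervalIntegrable f MeasureTheory.volume 0 r :=
  (hf.mono (by rw [uIcc_of_le hr]; exact Icc_subset_Ici_self)).intervalIntegrable

section Gron
variable {N : ℕ} (hN : 2 ≤ N) {ψ : ℝ → ℝ}
  (hψC2 : ContDiffOn ℝ 2 ψ (Ici 0))
  (hψpos : ∀ r > (0:ℝ), ψ r > 0) (hψ0 : ψ 0 = 0)
  (hψ'pos : ∀ r > (0:ℝ), deriv ψ r > 0)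

include hN hψC2 hψpos hψ0 in
lemma sol_le_init {u : ℝ → ℝ} (hu : ContDiffOn ℝ 2 u (Ici 0))
    (hode : ∀ r > (0:ℝ), deriv (deriv u) r + ((N : ℝ) - 1) * (deriv ψ r / ψ r) * deriv u r
        + Real.exp (u r) = 0) : ∀ r, 0 ≤ r → u r ≤ u 0 := by
  have hanti : AntitoneOn u (Ici 0) := by
    apply antitoneOn_of_deriv_nonpos (convex_Ici 0) hu.continuousOn
    · rw [interior_Ici]
      exact (hu.differentiableOn (by norm_num)).mono Ioi_subset_Ici_self
    · rw [interior_Ici]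
      intro x hx
      have hKI := key_identity hN hψC2 hψpos hψ0 hu hode x hx
      have hint : (0:ℝ) ≤ ∫ t in (0:ℝ)..x, Real.exp (u t) * ψ t ^ (N-1) := by
        apply intervalIntegral.integral_nonneg (le_of_lt hx)
        intro t ht
        have hψt : 0 ≤ ψ t := by
          rcases eq_or_lt_of_le ht.1 with h | h
          · rw [← h, hψ0]
          · exact (hψpos t h).le
        positivity
      nlinarith [pow_pos (hψpos x hx) (N-1)]
  exact fun r hr => hanti self_mem_Ici hr hr

include hN hψC2 hψpos hψ0 hψ'pos in
lemma gronwall_sol {u v : ℝ → ℝ} {M R : ℝ}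
    (hu : ContDiffOn ℝ 2 u (Ici 0))
    (hodeu : ∀ r > (0:ℝ), deriv (deriv u) r + ((N : ℝ) - 1) * (deriv ψ r / ψ r) * deriv u r
        + Real.exp (u r) = 0)
    (hv : ContDiffOn ℝ 2 v (Ici 0))
    (hodev : ∀ r > (0:ℝ), deriv (deriv v) r + ((N : ℝ) - 1) * (deriv ψ r / ψ r) * deriv v r
        + Real.exp (v r) = 0)
    (huM : u 0 ≤ M) (hvM : v 0 ≤ M) (hR : 0 < R) :
    ∀ r ∈ Icc 0 R, |v r - u r| ≤ |v 0 - u 0| * Real.exp ((Real.exp M * R) * R) := by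
  have hψcont : ContinuousOn ψ (Ici 0) := hψC2.continuousOn
  have hψnonneg : ∀ t, 0 ≤ t → 0 ≤ ψ t := by
    intro t ht
    rcases eq_or_lt_of_le ht with h | h
    · rw [← h, hψ0]
    · exact (hψpos t h).le
  have hψmono : MonotoneOn ψ (Ici 0) := by
    apply monotoneOn_of_deriv_nonneg (convex_Ici 0) hψcont
    · rw [interior_Ici]
      exact (hψC2.differentiableOn (by norm_num)).mono Ioi_subset_Ici_self
    · rw [interior_Ici]; exact fun x hx => (hψ'pos x hx).le
  set δ : ℝ := |v 0 - u 0| with hδ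
  set K : ℝ := Real.exp M * R with hK
  have hKpos : 0 < K := mul_pos (Real.exp_pos M) hR
  have huM' : ∀ t, 0 ≤ t → u t ≤ M :=
    fun t ht => (sol_le_init hN hψC2 hψpos hψ0 hu hodeu t ht).trans huM
  have hvM' : ∀ t, 0 ≤ t → v t ≤ M :=
    fun t ht => (sol_le_init hN hψC2 hψpos hψ0 hv hodev t ht).trans hvM
  set u₁ : ℝ → ℝ := derivWithin u (Ici 0) with hu₁
  set v₁ : ℝ → ℝ := derivWithin v (Ici 0) with hv₁
  set W : ℝ → ℝ := fun t => v₁ t - u₁ t with hW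
  have hWcont : ContinuousOn W (Ici 0) :=
    (hv.continuousOn_derivWithin (uniqueDiffOn_Ici 0) (by norm_num)).sub
      (hu.continuousOn_derivWithin (uniqueDiffOn_Ici 0) (by norm_num))
  set h : ℝ → ℝ := fun t => |v t - u t| with hh
  have hcont : ContinuousOn h (Ici 0) := (hv.continuousOn.sub hu.continuousOn).abs
  set G : ℝ → ℝ := fun x => ∫ t in (0:ℝ)..x, h t with hG
  have hGnonneg : ∀ x, 0 ≤ x → 0 ≤ G x := by
    intro x hx
    exact intervalIntegral.integral_nonneg hx (fun t _ => abs_nonneg _)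
  -- derivatives of u, v at interior points
  have hudiff : ∀ x > (0:ℝ), HasDerivAt u (deriv u x) x := fun x hx =>
    ((hu.contDiffAt (Ici_mem_nhds hx)).differentiableAt (by norm_num)).hasDerivAt
  have hvdiff : ∀ x > (0:ℝ), HasDerivAt v (deriv v x) x := fun x hx =>
    ((hv.contDiffAt (Ici_mem_nhds hx)).differentiableAt (by norm_num)).hasDerivAt
  have hWeq : ∀ s > (0:ℝ), W s = deriv v s - deriv u s := by
    intro s hs
    rw [hW]; dsimp only
    rw [hu₁, hv₁, derivWithin_of_mem_nhds (Ici_mem_nhds hs),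
      derivWithin_of_mem_nhds (Ici_mem_nhds hs)]
  -- the core estimate
  have hest : ∀ s > (0:ℝ), |W s| ≤ Real.exp M * G s := by
    intro s hs
    have hKIu := key_identity hN hψC2 hψpos hψ0 hu hodeu s hs
    have hKIv := key_identity hN hψC2 hψpos hψ0 hv hodev s hs
    have hintu : IntervalIntegrable (fun t => Real.exp (u t) * ψ t ^ (N-1))
        MeasureTheory.volume 0 s :=
      II0 ((Real.continuous_exp.comp_continuousOn hu.continuousOn).mul (hψcont.pow _)) hs.le
    have hintv : IntervalIntegrable (fun t => Real.exp (v t) * ψ t ^ (N-1))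
        MeasureTheory.volume 0 s :=
      II0 ((Real.continuous_exp.comp_continuousOn hv.continuousOn).mul (hψcont.pow _)) hs.le
    have hid : ψ s ^ (N-1) * W s
        = -∫ t in (0:ℝ)..s, (Real.exp (v t) - Real.exp (u t)) * ψ t ^ (N-1) := by
      have e1 : ψ s ^ (N-1) * W s = (∫ t in (0:ℝ)..s, Real.exp (u t) * ψ t ^ (N-1))
          - ∫ t in (0:ℝ)..s, Real.exp (v t) * ψ t ^ (N-1) := by
        rw [hWeq s hs, mul_sub, hKIu, hKIv]; ring
      rw [e1, ← intervalIntegral.integral_sub hintu hintv, ← intervalIntegral.integral_neg]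
      apply intervalIntegral.integral_congr
      intro t _
      ring
    have habs : |ψ s ^ (N-1) * W s| ≤ Real.exp M * ψ s ^ (N-1) * G s := by
      rw [hid, abs_neg]
      have h1 : |∫ t in (0:ℝ)..s, (Real.exp (v t) - Real.exp (u t)) * ψ t ^ (N-1)|
          ≤ ∫ t in (0:ℝ)..s, |(Real.exp (v t) - Real.exp (u t)) * ψ t ^ (N-1)| := by
        have := intervalIntegral.norm_integral_le_integral_norm
          (f := fun t => (Real.exp (v t) - Real.exp (u t)) * ψ t ^ (N-1))
          (μ := MeasureTheory.volume) (a := 0) (b := s) hs.le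
        simpa [Real.norm_eq_abs, abs_mul, abs_pow] using this
      have h2 : (∫ t in (0:ℝ)..s, |(Real.exp (v t) - Real.exp (u t)) * ψ t ^ (N-1)|)
          ≤ ∫ t in (0:ℝ)..s, (Real.exp M * ψ s ^ (N-1)) * h t := by
        apply intervalIntegral.integral_mono_on hs.le
        · exact (II0 (((Real.continuous_exp.comp_continuousOn hv.continuousOn).sub
            (Real.continuous_exp.comp_continuousOn hu.continuousOn)).mul (hψcont.pow _)) hs.le).abs
        · exact II0 (continuousOn_const.mul hcont) hs.le
        · intro t ht
          have hψt := hψnonneg t ht.1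
          have hψts : ψ t ≤ ψ s := hψmono ht.1 hs.le ht.2
          have hlip := exp_lip (hvM' t ht.1) (huM' t ht.1)
          rw [abs_mul, abs_of_nonneg (by positivity : (0:ℝ) ≤ ψ t ^ (N-1))]
          calc |Real.exp (v t) - Real.exp (u t)| * ψ t ^ (N-1)
              ≤ (Real.exp M * |v t - u t|) * ψ s ^ (N-1) := by
                apply mul_le_mul hlip (pow_le_pow_left₀ hψt hψts _) (by positivity)
                positivity
            _ = (Real.exp M * ψ s ^ (N-1)) * h t := by rw [hh]; ring
      have h3 : (∫ t in (0:ℝ)..s, (Real.exp M * ψ s ^ (N-1)) * h t)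
          = Real.exp M * ψ s ^ (N-1) * G s := by
        rw [intervalIntegral.integral_const_mul]
      calc |∫ t in (0:ℝ)..s, (Real.exp (v t) - Real.exp (u t)) * ψ t ^ (N-1)|
          ≤ ∫ t in (0:ℝ)..s, |(Real.exp (v t) - Real.exp (u t)) * ψ t ^ (N-1)| := h1
        _ ≤ ∫ t in (0:ℝ)..s, (Real.exp M * ψ s ^ (N-1)) * h t := h2
        _ = Real.exp M * ψ s ^ (N-1) * G s := h3
    have hψs : 0 < ψ s ^ (N-1) := pow_pos (hψpos s hs) _
    rw [abs_mul, abs_of_nonneg hψs.le] at habs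
    nlinarith [abs_nonneg (W s), hGnonneg s hs.le]
  have hG0 : G 0 = 0 := by simp [hG]
  have hGcont : ContinuousOn G (Icc 0 R) := by
    have hint : IntegrableOn h (uIcc 0 R) MeasureTheory.volume := by
      rw [uIcc_of_le hR.le]
      exact (hcont.mono Icc_subset_Ici_self).integrableOn_compact isCompact_Icc
    simpa [uIcc_of_le hR.le] using intervalIntegral.continuousOn_primitive_interval hint
  have hneb : (𝓝[Ioo (0:ℝ) R] 0).NeBot := by
    rw [← mem_closure_iff_nhdsWithin_neBot, closure_Ioo hR.ne]
    exact left_mem_Icc.2 hR.le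
  have hest0 : |W 0| ≤ Real.exp M * G 0 := by
    have t1 : Tendsto (fun s => |W s|) (𝓝[Ioo (0:ℝ) R] 0) (𝓝 |W 0|) :=
      (hWcont.abs.continuousWithinAt self_mem_Ici).mono (fun x hx => hx.1.le)
    have t2 : Tendsto (fun s => Real.exp M * G s) (𝓝[Ioo (0:ℝ) R] 0)
        (𝓝 (Real.exp M * G 0)) :=
      tendsto_const_nhds.mul ((hGcont.continuousWithinAt (left_mem_Icc.2 hR.le)).mono
        Ioo_subset_Icc_self)
    exact le_of_tendsto_of_tendsto t1 t2
      (eventually_of_mem self_mem_nhdsWithin fun s hs => hest s hs.1)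
  have hest' : ∀ s ∈ Icc (0:ℝ) R, |W s| ≤ Real.exp M * G s := by
    intro s hs
    rcases eq_or_lt_of_le hs.1 with h0 | h0
    · rw [← h0]; exact hest0
    · exact hest s h0
  have hFTC : ∀ r, 0 ≤ r → (∫ t in (0:ℝ)..r, W t) = (v r - u r) - (v 0 - u 0) := by
    intro r hr
    rcases eq_or_lt_of_le hr with h0 | h0
    · rw [← h0]; simp
    · apply intervalIntegral.integral_eq_sub_of_hasDeriv_right_of_le hr
        ((hv.continuousOn.sub hu.continuousOn).mono Icc_subset_Ici_self)
      · intro x hx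
        have hd : HasDerivAt (fun t => v t - u t) (deriv v x - deriv u x) x :=
          (hvdiff x hx.1).sub (hudiff x hx.1)
        rw [← hWeq x hx.1] at hd
        exact hd.hasDerivWithinAt
      · exact II0 hWcont hr
  have hhb : ∀ r ∈ Icc (0:ℝ) R, h r ≤ δ + K * G r := by
    intro r hr
    have e := hFTC r hr.1
    have b1 : |∫ t in (0:ℝ)..r, W t| ≤ ∫ t in (0:ℝ)..r, |W t| := by
      simpa [Real.norm_eq_abs] using intervalIntegral.norm_integral_le_integral_norm
        (f := W) (a := 0) (b := r) (μ := MeasureTheory.volume) hr.1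
    have b2 : (∫ t in (0:ℝ)..r, |W t|) ≤ ∫ t in (0:ℝ)..r, Real.exp M * G r := by
      apply intervalIntegral.integral_mono_on hr.1 ((II0 hWcont hr.1).abs)
        intervalIntegrable_const
      intro t ht
      have mono : G t ≤ G r := by
        have hint2 : IntervalIntegrable h MeasureTheory.volume t r := by
          apply ContinuousOn.intervalIntegrable
          apply hcont.mono
          rw [uIcc_of_le ht.2]
          exact fun x hx => le_trans ht.1 hx.1
        have hadd : G t + (∫ s in t..r, h s) = G r :=
          intervalIntegral.integral_add_adjacent_intervals (II0 hcont ht.1) hint2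
        have hnn : 0 ≤ ∫ s in t..r, h s :=
          intervalIntegral.integral_nonneg ht.2 (fun _ _ => abs_nonneg _)
        linarith
      calc |W t| ≤ Real.exp M * G t := hest' t ⟨ht.1, ht.2.trans hr.2⟩
        _ ≤ Real.exp M * G r := mul_le_mul_of_nonneg_left mono (Real.exp_pos M).le
    have b3 : (∫ t in (0:ℝ)..r, Real.exp M * G r) = Real.exp M * G r * r := by
      simp [intervalIntegral.integral_const, smul_eq_mul]; ring
    have hvr : v r - u r = (v 0 - u 0) + ∫ t in (0:ℝ)..r, W t := by linarith
    have hb4 : Real.exp M * G r * r ≤ K * G r := by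
      rw [hK]
      nlinarith [mul_nonneg (mul_nonneg (Real.exp_pos M).le (hGnonneg r hr.1)) (sub_nonneg.2 hr.2)]
    calc h r = |(v 0 - u 0) + ∫ t in (0:ℝ)..r, W t| := by rw [hh]; dsimp only; rw [hvr]
      _ ≤ δ + |∫ t in (0:ℝ)..r, W t| := by rw [hδ]; exact abs_add_le _ _
      _ ≤ δ + Real.exp M * G r * r := by rw [← b3]; linarith
      _ ≤ δ + K * G r := by linarith
  have hGron := norm_le_gronwallBound_of_norm_deriv_right_le (f := G) (f' := h)
    (δ := 0) (K := K) (ε := δ) (a := 0) (b := R) hGcont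
    (fun x hx => primitive_hasDerivWithinAt hcont hx.1)
    (by simp [hG0]) ?_
  · intro r hr
    have hGr := hGron r hr
    rw [Real.norm_eq_abs, abs_of_nonneg (hGnonneg r hr.1), sub_zero,
      gronwallBound_of_K_ne_0 hKpos.ne'] at hGr
    simp only [zero_mul, zero_add] at hGr
    have h1 := hhb r hr
    have h2 : K * (δ / K * (Real.exp (K * r) - 1)) = δ * (Real.exp (K * r) - 1) := by
      field_simp
    have h3 : h r ≤ δ * Real.exp (K * r) := by nlinarith [hKpos]
    have h4 : Real.exp (K * r) ≤ Real.exp (K * R) :=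
      Real.exp_le_exp.2 (mul_le_mul_of_nonneg_left hr.2 hKpos.le)
    have h5 : h r ≤ δ * Real.exp (K * R) := by nlinarith [abs_nonneg (v 0 - u 0)]
    calc |v r - u r| = h r := rfl
      _ ≤ δ * Real.exp (K * R) := h5
      _ = |v 0 - u 0| * Real.exp ((Real.exp M * R) * R) := by rw [hδ, hK]
  · intro x hx
    have := hhb x ⟨hx.1, hx.2.le⟩
    rw [Real.norm_eq_abs, Real.norm_eq_abs, abs_of_nonneg (hGnonneg x hx.1),
      abs_of_nonneg (abs_nonneg _)]
    linarith
end Gron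


theorem statement14 (N : ℕ) (hN : 2 ≤ N) (ψ : ℝ → ℝ)
    (hψC2 : ContDiffOn ℝ 2 ψ (Ici 0))
    (hψpos : ∀ r > (0:ℝ), ψ r > 0)
    (hψ0 : ψ 0 = 0) (hψ''0 : deriv (deriv ψ) 0 = 0) (hψ'0 : deriv ψ 0 = 1)
    (hψ'pos : ∀ r > (0:ℝ), deriv ψ r > 0)
    (Λ : EReal) (hΛpos : 0 < Λ)
    (hA3 : Filter.Tendsto (fun r => ((deriv ψ r / ψ r : ℝ) : EReal)) Filter.atTop (nhds Λ))
    (U : ℝ → ℝ → ℝ)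
    (hU : ∀ α : ℝ, ContDiffOn ℝ 2 (U α) (Ici 0) ∧ U α 0 = α ∧ deriv (U α) 0 = 0 ∧
      ∀ r > (0:ℝ), deriv (deriv (U α)) r + ((N : ℝ) - 1) * (deriv ψ r / ψ r) * deriv (U α) r
        + Real.exp (U α r) = 0)
    (hne : {α : ℝ | IsStableSolution N ψ (U α)}.Nonempty)
    (hbdd : BddAbove {α : ℝ | IsStableSolution N ψ (U α)})
    : IsStableSolution N ψ (U (sSup {α : ℝ | IsStableSolution N ψ (U α)})) := by
  set S := {α : ℝ | IsStableSolution N ψ (U α)} with hS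
  set η := sSup S with hη
  intro χ hχ hχs
  obtain ⟨R0, hR0⟩ := hχs.isBounded.subset_closedBall 0
  set R : ℝ := max R0 1 with hRdef
  have hR : (0:ℝ) < R := lt_of_lt_of_le one_pos (le_max_right _ _)
  have hχ0 : ∀ r : ℝ, R < r → χ r = 0 := by
    intro r hr
    apply image_eq_zero_of_notMem_tsupport
    intro hmem
    have := hR0 hmem
    rw [Metric.mem_closedBall, Real.dist_eq, sub_zero] at this
    have : r ≤ R0 := le_trans (le_abs_self r) this
    have : r ≤ R := this.trans (le_max_left _ _)
    linarith
  set f : ℝ → ℝ → ℝ := fun γ r => Real.exp (U γ r) * (χ r) ^ 2 * ψ r ^ (N - 1) with hf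
  have hcontf : ∀ γ, ContinuousOn (f γ) (Ici 0) := by
    intro γ
    exact ((Real.continuous_exp.comp_continuousOn (hU γ).1.continuousOn).mul
      ((hχ.continuous.pow 2).continuousOn)).mul (hψC2.continuousOn.pow _)
  have hψnonneg : ∀ t : ℝ, 0 ≤ t → 0 ≤ ψ t := by
    intro t ht
    rcases eq_or_lt_of_le ht with h | h
    · rw [← h, hψ0]
    · exact (hψpos t h).le
  have hint : ∀ γ, IntegrableOn (f γ) (Ioi 0) MeasureTheory.volume := by
    intro γ
    rw [← Ioc_union_Ioi_eq_Ioi hR.le]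
    apply MeasureTheory.IntegrableOn.union
    · exact (((hcontf γ).mono Icc_subset_Ici_self).integrableOn_compact
        isCompact_Icc).mono_set Ioc_subset_Icc_self
    · apply (integrableOn_zero (μ := MeasureTheory.volume) (s := Ioi R)).congr_fun
        ?_ measurableSet_Ioi
      intro r hr
      simp [hf, hχ0 r hr]
  set I1 : ℝ := ∫ r in Set.Ioi (0:ℝ), (deriv χ r) ^ 2 * ψ r ^ (N - 1) with hI1def
  have hI1 : 0 ≤ I1 :=
    MeasureTheory.setIntegral_nonneg measurableSet_Ioi
      (fun r hr => mul_nonneg (sq_nonneg _) (pow_nonneg (hψpos r hr).le _))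
  rw [sub_nonneg]
  set C : ℝ := Real.exp ((Real.exp η * R) * R) with hC
  have hCpos : 0 < C := Real.exp_pos _
  have key : ∀ ε > (0:ℝ), (∫ r in Set.Ioi (0:ℝ), f η r) ≤ Real.exp (ε * C) * I1 := by
    intro ε hε
    obtain ⟨α, hα, hαgt⟩ := exists_lt_of_lt_csSup hne (by linarith : η - ε < η)
    have hαη : α ≤ η := le_csSup hbdd hα
    have hgw := gronwall_sol hN hψC2 hψpos hψ0 hψ'pos (hU α).1 (hU α).2.2.2
      (hU η).1 (hU η).2.2.2 (M := η) (R := R)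
      (by rw [(hU α).2.1]; exact hαη) (by rw [(hU η).2.1]) hR
    have hps : ∀ r ∈ Ioi (0:ℝ), f η r ≤ Real.exp (ε * C) * f α r := by
      intro r hr
      rcases le_or_gt r R with hrR | hrR
      · have hb := hgw r ⟨(le_of_lt hr), hrR⟩
        rw [(hU α).2.1, (hU η).2.1, abs_of_nonneg (sub_nonneg.2 hαη)] at hb
        have hb2 : |U η r - U α r| ≤ ε * C := by
          calc |U η r - U α r| ≤ (η - α) * Real.exp ((Real.exp η * R) * R) := hb
            _ ≤ ε * C := by
                rw [hC]
                apply mul_le_mul_of_nonneg_right (by linarith) (Real.exp_pos _).le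
        have hub : U η r ≤ U α r + ε * C := by
          have := (abs_le.1 hb2).2; linarith
        have hexp : Real.exp (U η r) ≤ Real.exp (ε * C) * Real.exp (U α r) := by
          rw [← Real.exp_add]
          exact Real.exp_le_exp.2 (by linarith)
        have hmulnn : 0 ≤ (χ r) ^ 2 * ψ r ^ (N - 1) :=
          mul_nonneg (sq_nonneg _) (pow_nonneg (hψnonneg r hr.le) _)
        calc f η r = Real.exp (U η r) * ((χ r) ^ 2 * ψ r ^ (N - 1)) := by rw [hf]; ring
          _ ≤ (Real.exp (ε * C) * Real.exp (U α r)) * ((χ r) ^ 2 * ψ r ^ (N - 1)) :=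
              mul_le_mul_of_nonneg_right hexp hmulnn
          _ = Real.exp (ε * C) * f α r := by rw [hf]; ring
      · rw [hf]; simp [hχ0 r hrR]
    have hm : (∫ r in Set.Ioi (0:ℝ), f η r)
        ≤ ∫ r in Set.Ioi (0:ℝ), Real.exp (ε * C) * f α r :=
      MeasureTheory.setIntegral_mono_on (hint η) ((hint α).const_mul _)
        measurableSet_Ioi hps
    have hα' : 0 ≤ I1 - ∫ r in Set.Ioi (0:ℝ), f α r := hα χ hχ hχs
    calc (∫ r in Set.Ioi (0:ℝ), f η r)
        ≤ ∫ r in Set.Ioi (0:ℝ), Real.exp (ε * C) * f α r := hm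
      _ = Real.exp (ε * C) * ∫ r in Set.Ioi (0:ℝ), f α r := by
          rw [MeasureTheory.integral_const_mul]
      _ ≤ Real.exp (ε * C) * I1 := by
          apply mul_le_mul_of_nonneg_left (by linarith) (Real.exp_pos _).le
  have htend : Tendsto (fun ε : ℝ => Real.exp (ε * C) * I1) (𝓝[>] (0:ℝ)) (𝓝 I1) := by
    have hcont : Continuous fun ε : ℝ => Real.exp (ε * C) * I1 := by fun_prop
    have := hcont.tendsto 0
    simp only [zero_mul, Real.exp_zero, one_mul] at this
    exact this.mono_left nhdsWithin_le_nhds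
  exact ge_of_tendsto htend
    (eventually_of_mem self_mem_nhdsWithin fun ε hε => key ε hε)
end
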